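/- arXiv:math/0512496 — 6 statements merged into one kernel-verified Lean document; each statement's English description precedes it below -/
import Mathlib

section
/- Let P, Q ∈ ℤ² be points both of whose coordinates are ≥ 1, and let n ≥ 0. Then the number of good walks of length n from P to Q satisfies N_g(P,Q;n) = N(P,Q;n) − N(P,r₁(Q);n) − N(P,r₂(Q);n) + N(P,r(Q);n). -/
/-- A walk of length `n` in `ℤ²` from `P` to `Q`: a sequence `P = p 0, p 1, …, p n = Q`
with every step in `{(1,0), (−1,0), (0,1), (0,−1)}`. -/
def IsWalk (n : ℕ) (P Q : ℤ × ℤ) (p : Fin (n + 1) → ℤ × ℤ) : Prop :=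
  p 0 = P ∧ p (Fin.last n) = Q ∧
    ∀ i : Fin n, p i.succ - p i.castSucc ∈
      ({(1, 0), (-1, 0), (0, 1), (0, -1)} : Set (ℤ × ℤ))

/-- A good walk: every point of the walk (including endpoints) has both coordinates `≥ 1`. -/
def IsGoodWalk (n : ℕ) (P Q : ℤ × ℤ) (p : Fin (n + 1) → ℤ × ℤ) : Prop :=
  IsWalk n P Q p ∧ ∀ i, 1 ≤ (p i).1 ∧ 1 ≤ (p i).2

/-- `N P Q n`: the number of all walks of length `n` from `P` to `Q`. -/
noncomputable def N (P Q : ℤ × ℤ) (n : ℕ) : ℕ :=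
  Nat.card {p : Fin (n + 1) → ℤ × ℤ // IsWalk n P Q p}

/-- `Ng P Q n`: the number of good walks of length `n` from `P` to `Q`. -/
noncomputable def Ng (P Q : ℤ × ℤ) (n : ℕ) : ℕ :=
  Nat.card {p : Fin (n + 1) → ℤ × ℤ // IsGoodWalk n P Q p}

namespace ReflAux

def D : Set (ℤ × ℤ) := {(1, 0), (-1, 0), (0, 1), (0, -1)}

lemma isWalk_def {n : ℕ} {P Q : ℤ × ℤ} {p : Fin (n + 1) → ℤ × ℤ} :
    IsWalk n P Q p ↔ p 0 = P ∧ p (Fin.last n) = Q ∧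
      ∀ i : Fin n, p i.succ - p i.castSucc ∈ D := Iff.rfl

section Generic
variable {n : ℕ} (f : ℤ × ℤ → ℤ) (σ : ℤ × ℤ → ℤ × ℤ)

/-- touches the line `f = 0` -/
def Touch (p : Fin (n + 1) → ℤ × ℤ) : Prop := ∃ i, f (p i) = 0

lemma touchSet_nonempty {p : Fin (n + 1) → ℤ × ℤ} (h : Touch f p) :
    (Finset.univ.filter fun i => f (p i) = 0).Nonempty := by
  obtain ⟨i, hi⟩ := h; exact ⟨i, by simpa using hi⟩

noncomputable def tau (p : Fin (n + 1) → ℤ × ℤ) (h : Touch f p) : Fin (n + 1) :=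
  (Finset.univ.filter fun i => f (p i) = 0).min' (touchSet_nonempty f h)

lemma tau_spec (p : Fin (n + 1) → ℤ × ℤ) (h : Touch f p) : f (p (tau f p h)) = 0 := by
  have := Finset.min'_mem _ (touchSet_nonempty f h)
  exact (Finset.mem_filter.mp this).2

lemma tau_min {p : Fin (n + 1) → ℤ × ℤ} (h : Touch f p) {j : Fin (n + 1)}
    (hj : f (p j) = 0) : tau f p h ≤ j :=
  Finset.min'_le _ _ (by simpa using hj)

noncomputable def Phi (p : Fin (n + 1) → ℤ × ℤ) (h : Touch f p) : Fin (n + 1) → ℤ × ℤ :=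
  fun i => if i ≤ tau f p h then p i else σ (p i)

lemma Phi_of_le {p : Fin (n + 1) → ℤ × ℤ} {h : Touch f p} {i : Fin (n + 1)}
    (hi : i ≤ tau f p h) : Phi f σ p h i = p i := if_pos hi

lemma Phi_of_gt {p : Fin (n + 1) → ℤ × ℤ} {h : Touch f p} {i : Fin (n + 1)}
    (hi : tau f p h < i) : Phi f σ p h i = σ (p i) := if_neg (not_le.2 hi)

lemma Phi_touch (p : Fin (n + 1) → ℤ × ℤ) (h : Touch f p) : Touch f (Phi f σ p h) :=
  ⟨tau f p h, by rw [Phi_of_le f σ le_rfl]; exact tau_spec f p h⟩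

lemma tau_Phi (p : Fin (n + 1) → ℤ × ℤ) (h : Touch f p) :
    tau f (Phi f σ p h) (Phi_touch f σ p h) = tau f p h := by
  apply le_antisymm
  · exact tau_min f _ (by rw [Phi_of_le f σ le_rfl]; exact tau_spec f p h)
  · rcases le_or_gt (tau f p h) (tau f (Phi f σ p h) (Phi_touch f σ p h)) with h' | h'
    · exact h'
    · exfalso
      have h0 : f (p (tau f (Phi f σ p h) (Phi_touch f σ p h))) = 0 := by
        rw [← Phi_of_le f σ h'.le]; exact tau_spec f _ _
      exact absurd (tau_min f h h0) (not_le.2 h')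

variable (hσσ : ∀ z, σ (σ z) = z) (hfix : ∀ z, f z = 0 → σ z = z)
  (hσsub : ∀ a b, σ (a - b) = σ a - σ b) (hD : ∀ d ∈ D, σ d ∈ D)

include hσσ in
lemma Phi_Phi (p : Fin (n + 1) → ℤ × ℤ) (h : Touch f p) :
    Phi f σ (Phi f σ p h) (Phi_touch f σ p h) = p := by
  funext i
  rcases le_or_gt i (tau f p h) with hi | hi
  · rw [Phi_of_le f σ (by rw [tau_Phi]; exact hi), Phi_of_le f σ hi]
  · rw [Phi_of_gt f σ (by rw [tau_Phi]; exact hi), Phi_of_gt f σ hi, hσσ]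

include hfix hσsub hD in
lemma Phi_walk {P Q : ℤ × ℤ} {p : Fin (n + 1) → ℤ × ℤ} (hw : IsWalk n P Q p)
    (h : Touch f p) (hQ : f Q ≠ 0) : IsWalk n P (σ Q) (Phi f σ p h) := by
  obtain ⟨h0, hl, hs⟩ := hw
  refine ⟨?_, ?_, ?_⟩
  · rw [Phi_of_le f σ (Fin.zero_le _), h0]
  · have hlt : tau f p h < Fin.last n := by
      rcases lt_or_eq_of_le (Fin.le_last (tau f p h)) with h' | h'
      · exact h'
      · exact absurd (by rw [← hl, ← h']; exact tau_spec f p h) hQ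
    rw [Phi_of_gt f σ hlt, hl]
  · intro i
    rcases le_or_gt i.succ (tau f p h) with h1 | h1
    · rw [Phi_of_le f σ h1, Phi_of_le f σ ((Fin.castSucc_lt_succ (i := i)).le.trans h1)]
      exact hs i
    · rcases le_or_gt i.castSucc (tau f p h) with h2 | h2
      · have he : tau f p h = i.castSucc := by
          apply le_antisymm _ h2
          exact Fin.le_castSucc_iff.mpr h1
        rw [Phi_of_gt f σ h1, Phi_of_le f σ h2,
          show p i.castSucc = σ (p i.castSucc) from (hfix _ (he ▸ tau_spec f p h)).symm,
          ← hσsub]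
        exact hD _ (hs i)
      · rw [Phi_of_gt f σ h1, Phi_of_gt f σ h2, ← hσsub]
        exact hD _ (hs i)

/-- The reflection bijection, with an extra invariant predicate `E`. -/
noncomputable def phiEquiv (P Q : ℤ × ℤ) (hQ : f Q ≠ 0) (hQ' : f (σ Q) ≠ 0)
    (E : (Fin (n + 1) → ℤ × ℤ) → Prop)
    (hE : ∀ p (h : Touch f p), E p → E (Phi f σ p h)) :
    {p : Fin (n + 1) → ℤ × ℤ // (IsWalk n P Q p ∧ Touch f p) ∧ E p} ≃
      {p : Fin (n + 1) → ℤ × ℤ // (IsWalk n P (σ Q) p ∧ Touch f p) ∧ E p} where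
  toFun x := ⟨Phi f σ x.1 x.2.1.2,
    ⟨⟨Phi_walk f σ hfix hσsub hD x.2.1.1 x.2.1.2 hQ, Phi_touch f σ x.1 x.2.1.2⟩,
      hE x.1 x.2.1.2 x.2.2⟩⟩
  invFun x := ⟨Phi f σ x.1 x.2.1.2, by
    refine ⟨⟨?_, Phi_touch f σ x.1 x.2.1.2⟩, hE x.1 x.2.1.2 x.2.2⟩
    have hv := Phi_walk f σ hfix hσsub hD x.2.1.1 x.2.1.2 hQ'
    rwa [hσσ Q] at hv⟩
  left_inv x := Subtype.ext (Phi_Phi f σ hσσ x.1 x.2.1.2)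
  right_inv x := Subtype.ext (Phi_Phi f σ hσσ x.1 x.2.1.2)

omit hσσ hfix hσsub hD in
lemma touch_of_walk {P Q : ℤ × ℤ} {p : Fin (n + 1) → ℤ × ℤ} (hw : IsWalk n P Q p)
    (hf : ∀ a b : ℤ × ℤ, f (a - b) = f a - f b)
    (hstep : ∀ d ∈ D, f d = 1 ∨ f d = -1 ∨ f d = 0)
    (h0 : 0 < f P) (hex : ∃ i, f (p i) ≤ 0) : Touch f p := by
  classical
  have hne : (Finset.univ.filter fun i => f (p i) ≤ 0).Nonempty := by
    obtain ⟨i, hi⟩ := hex; exact ⟨i, by simpa using hi⟩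
  set m := (Finset.univ.filter fun i : Fin (n + 1) => f (p i) ≤ 0).min' hne with hm
  have hmle : f (p m) ≤ 0 := by
    have := Finset.min'_mem _ hne; simpa [← hm] using this
  have hmin : ∀ j : Fin (n + 1), j < m → 0 < f (p j) := by
    intro j hj
    by_contra hc
    exact absurd (Finset.min'_le _ _ (by simpa using not_lt.mp hc)) (not_le.2 hj)
  have hm0 : m ≠ 0 := by
    intro hE
    have : 0 < f (p 0) := by rw [hw.1]; exact h0
    rw [hE] at hmle; omega
  obtain ⟨j, hj⟩ := Fin.exists_succ_eq_of_ne_zero hm0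
  rw [← hj] at hmle
  have h1 : 0 < f (p j.castSucc) := hmin _ (hj ▸ Fin.castSucc_lt_succ (i := j))
  have h2 := hstep _ (hw.2.2 j)
  have h3 : f (p j.succ) - f (p j.castSucc) = f (p j.succ - p j.castSucc) := (hf _ _).symm
  exact ⟨j.succ, by omega⟩

end Generic

lemma walk_ext {n : ℕ} {P Q Q' : ℤ × ℤ} {p q : Fin (n + 1) → ℤ × ℤ}
    (hp : IsWalk n P Q p) (hq : IsWalk n P Q' q)
    (hs : ∀ i : Fin n, p i.succ - p i.castSucc = q i.succ - q i.castSucc) : p = q := by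
  suffices h : ∀ k (hk : k < n + 1), p ⟨k, hk⟩ = q ⟨k, hk⟩ by
    funext i; rcases i with ⟨k, hk⟩; exact h k hk
  intro k
  induction k with
  | zero => intro hk; exact hp.1.trans hq.1.symm
  | succ k ih =>
    intro hk
    have hkn : k < n := by omega
    have hk' : k < n + 1 := by omega
    have e1 : (⟨k + 1, hk⟩ : Fin (n + 1)) = (⟨k, hkn⟩ : Fin n).succ := rfl
    have e2 : (⟨k, hk'⟩ : Fin (n + 1)) = (⟨k, hkn⟩ : Fin n).castSucc := rfl
    have hd := hs ⟨k, hkn⟩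
    have ihk := ih hk'
    rw [e2] at ihk
    rw [e1]
    rw [ihk] at hd
    exact sub_left_inj.mp hd

lemma walk_finite (n : ℕ) (P Q : ℤ × ℤ) :
    {p : Fin (n + 1) → ℤ × ℤ | IsWalk n P Q p}.Finite := by
  have hDfin : D.Finite := Set.Finite.insert _ (Set.Finite.insert _ (Set.Finite.insert _
    (Set.finite_singleton _)))
  haveI : Finite ↥D := hDfin.to_subtype
  haveI : Finite {p : Fin (n + 1) → ℤ × ℤ // IsWalk n P Q p} := by
    apply Finite.of_injective
      (fun (x : {p : Fin (n + 1) → ℤ × ℤ // IsWalk n P Q p}) (i : Fin n) =>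
        (⟨x.1 i.succ - x.1 i.castSucc, x.2.2.2 i⟩ : D))
    intro x y hxy
    exact Subtype.ext (walk_ext x.2 y.2 fun i => congrArg Subtype.val (congrFun hxy i))
  exact Set.finite_coe_iff.mp ‹_›

/-! Instantiations -/

def f1 : ℤ × ℤ → ℤ := fun z => z.1
def f2 : ℤ × ℤ → ℤ := fun z => z.2
def s1 : ℤ × ℤ → ℤ × ℤ := fun z => (-z.1, z.2)
def s2 : ℤ × ℤ → ℤ × ℤ := fun z => (z.1, -z.2)

lemma hss1 : ∀ z, s1 (s1 z) = z := fun z => by simp [s1]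
lemma hss2 : ∀ z, s2 (s2 z) = z := fun z => by simp [s2]
lemma hfix1 : ∀ z, f1 z = 0 → s1 z = z := fun z h => by
  simp [s1, f1] at *; simp [Prod.ext_iff, h]
lemma hfix2 : ∀ z, f2 z = 0 → s2 z = z := fun z h => by
  simp [s2, f2] at *; simp [Prod.ext_iff, h]
lemma hsub1 : ∀ a b : ℤ × ℤ, s1 (a - b) = s1 a - s1 b := fun a b => by
  simp [s1, Prod.ext_iff]; ring
lemma hsub2 : ∀ a b : ℤ × ℤ, s2 (a - b) = s2 a - s2 b := fun a b => by
  simp [s2, Prod.ext_iff]; ring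
lemma hD1 : ∀ d ∈ D, s1 d ∈ D := by
  intro d hd
  simp only [D, Set.mem_insert_iff, Set.mem_singleton_iff] at hd ⊢
  rcases hd with rfl | rfl | rfl | rfl <;> simp [s1]
lemma hD2 : ∀ d ∈ D, s2 d ∈ D := by
  intro d hd
  simp only [D, Set.mem_insert_iff, Set.mem_singleton_iff] at hd ⊢
  rcases hd with rfl | rfl | rfl | rfl <;> simp [s2]
lemma hstep1 : ∀ d ∈ D, f1 d = 1 ∨ f1 d = -1 ∨ f1 d = 0 := by
  intro d hd
  simp only [D, Set.mem_insert_iff, Set.mem_singleton_iff] at hd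
  rcases hd with rfl | rfl | rfl | rfl <;> simp [f1]
lemma hstep2 : ∀ d ∈ D, f2 d = 1 ∨ f2 d = -1 ∨ f2 d = 0 := by
  intro d hd
  simp only [D, Set.mem_insert_iff, Set.mem_singleton_iff] at hd
  rcases hd with rfl | rfl | rfl | rfl <;> simp [f2]
lemma hf1 : ∀ a b : ℤ × ℤ, f1 (a - b) = f1 a - f1 b := fun _ _ => rfl
lemma hf2 : ∀ a b : ℤ × ℤ, f2 (a - b) = f2 a - f2 b := fun _ _ => rfl

lemma Phi1_snd {n : ℕ} (p : Fin (n + 1) → ℤ × ℤ) (h : Touch f1 p) (i : Fin (n + 1)) :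
    (Phi f1 s1 p h i).2 = (p i).2 := by
  unfold Phi; split <;> rfl

lemma hE12 {n : ℕ} : ∀ (p : Fin (n + 1) → ℤ × ℤ) (h : Touch f1 p),
    Touch f2 p → Touch f2 (Phi f1 s1 p h) := by
  rintro p h ⟨i, hi⟩
  exact ⟨i, by rw [show f2 (Phi f1 s1 p h i) = (Phi f1 s1 p h i).2 from rfl, Phi1_snd]; exact hi⟩

end ReflAux

open ReflAux

/-- The reflection principle count of good walks:
`N_g(P,Q;n) = N(P,Q;n) − N(P,r₁(Q);n) − N(P,r₂(Q);n) + N(P,r(Q);n)`, where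
`r₁(x,y) = (−x,y)`, `r₂(x,y) = (x,−y)` and `r(x,y) = (−x,−y)`. -/
theorem card_goodWalks_reflection (P Q : ℤ × ℤ)
    (hP : 1 ≤ P.1 ∧ 1 ≤ P.2) (hQ : 1 ≤ Q.1 ∧ 1 ≤ Q.2) (n : ℕ) :
    (Ng P Q n : ℤ) =
      (N P Q n : ℤ) - N P (-Q.1, Q.2) n - N P (Q.1, -Q.2) n + N P (-Q.1, -Q.2) n := by
  classical
  set W : Set (Fin (n + 1) → ℤ × ℤ) := {p | IsWalk n P Q p} with hW
  set G : Set (Fin (n + 1) → ℤ × ℤ) := {p | IsGoodWalk n P Q p} with hG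
  set A : Set (Fin (n + 1) → ℤ × ℤ) := {p | IsWalk n P Q p ∧ Touch f1 p} with hA
  set B : Set (Fin (n + 1) → ℤ × ℤ) := {p | IsWalk n P Q p ∧ Touch f2 p} with hB
  have hWfin : W.Finite := walk_finite n P Q
  have hAfin : A.Finite := hWfin.subset fun p hp => hp.1
  have hBfin : B.Finite := hWfin.subset fun p hp => hp.1
  have hGW : G ⊆ W := fun p hp => hp.1
  -- bad walks are exactly those touching one of the two lines
  have hdiff : W \ G = A ∪ B := by
    ext p
    simp only [Set.mem_diff, Set.mem_union, hW, hG, hA, hB, Set.mem_setOf_eq]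
    constructor
    · rintro ⟨hw, hng⟩
      have : ¬ ∀ i, 1 ≤ (p i).1 ∧ 1 ≤ (p i).2 := fun h => hng ⟨hw, h⟩
      push_neg at this
      obtain ⟨i, hi⟩ := this
      rcases le_or_gt 1 (p i).1 with h1 | h1
      · right
        refine ⟨hw, touch_of_walk f2 hw hf2 hstep2 (by simp only [f2]; omega) ⟨i, ?_⟩⟩
        have := hi h1; show (p i).2 ≤ 0; omega
      · left
        exact ⟨hw, touch_of_walk f1 hw hf1 hstep1 (by simp only [f1]; omega) ⟨i, by show (p i).1 ≤ 0; omega⟩⟩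
    · rintro (⟨hw, i, hi⟩ | ⟨hw, i, hi⟩) <;>
      · refine ⟨hw, fun hg => ?_⟩
        have := hg.2 i
        simp only [f1, f2] at hi
        omega
  -- reflection identities
  have hQ1 : f1 Q ≠ 0 := by have := hQ.1; simp only [f1]; omega
  have hQ1' : f1 (s1 Q) ≠ 0 := by have := hQ.1; simp only [f1, s1]; omega
  have hQ2 : f2 Q ≠ 0 := by have := hQ.2; simp only [f2]; omega
  have hQ2' : f2 (s2 Q) ≠ 0 := by have := hQ.2; simp only [f2, s2]; omega
  have hQ12 : f2 (s1 Q) ≠ 0 := by have := hQ.2; simp only [f2, s1]; omega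
  have hQ12' : f2 (s2 (s1 Q)) ≠ 0 := by have := hQ.2; simp only [f2, s2, s1]; omega
  -- automatic touching lemmas
  have auto1 : ∀ p, IsWalk n P (s1 Q) p → Touch f1 p := by
    intro p hw
    refine touch_of_walk f1 hw hf1 hstep1 (by have := hP.1; simp only [f1]; omega)
      ⟨Fin.last n, ?_⟩
    rw [hw.2.1]; have := hQ.1; simp only [f1, s1]; omega
  have auto2 : ∀ R, f2 R ≤ 0 → ∀ p, IsWalk n P R p → Touch f2 p := by
    intro R hR p hw
    refine touch_of_walk f2 hw hf2 hstep2 (by have := hP.2; simp only [f2]; omega)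
      ⟨Fin.last n, ?_⟩
    rw [hw.2.1]; exact hR
  have cardA : A.ncard = N P (-Q.1, Q.2) n := by
    rw [← Nat.card_coe_set_eq]
    have e0 : ↥A ≃ {p : Fin (n + 1) → ℤ × ℤ // (IsWalk n P Q p ∧ Touch f1 p) ∧ True} :=
      Equiv.subtypeEquivRight fun p => by simp [hA, Set.mem_setOf_eq]
    have e1 := phiEquiv (n := n) f1 s1 hss1 hfix1 hsub1 hD1 P Q hQ1 hQ1' (fun _ => True)
      (fun _ _ h => h)
    have e2 : {p : Fin (n + 1) → ℤ × ℤ // (IsWalk n P (s1 Q) p ∧ Touch f1 p) ∧ True} ≃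
        {p : Fin (n + 1) → ℤ × ℤ // IsWalk n P (s1 Q) p} :=
      Equiv.subtypeEquivRight fun p =>
        ⟨fun h => h.1.1, fun h => ⟨⟨h, auto1 p h⟩, trivial⟩⟩
    rw [Nat.card_congr ((e0.trans e1).trans e2)]
    rfl
  have cardB : B.ncard = N P (Q.1, -Q.2) n := by
    rw [← Nat.card_coe_set_eq]
    have e0 : ↥B ≃ {p : Fin (n + 1) → ℤ × ℤ // (IsWalk n P Q p ∧ Touch f2 p) ∧ True} :=
      Equiv.subtypeEquivRight fun p => by simp [hB, Set.mem_setOf_eq]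
    have e1 := phiEquiv (n := n) f2 s2 hss2 hfix2 hsub2 hD2 P Q hQ2 hQ2' (fun _ => True)
      (fun _ _ h => h)
    have e2 : {p : Fin (n + 1) → ℤ × ℤ // (IsWalk n P (s2 Q) p ∧ Touch f2 p) ∧ True} ≃
        {p : Fin (n + 1) → ℤ × ℤ // IsWalk n P (s2 Q) p} :=
      Equiv.subtypeEquivRight fun p =>
        ⟨fun h => h.1.1, fun h => ⟨⟨h, auto2 _ (by have := hQ.2; simp only [f2, s2]; omega)
          p h⟩, trivial⟩⟩
    rw [Nat.card_congr ((e0.trans e1).trans e2)]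
    rfl
  have cardAB : (A ∩ B).ncard = N P (-Q.1, -Q.2) n := by
    rw [← Nat.card_coe_set_eq]
    have e0 : ↥(A ∩ B) ≃
        {p : Fin (n + 1) → ℤ × ℤ // (IsWalk n P Q p ∧ Touch f1 p) ∧ Touch f2 p} :=
      Equiv.subtypeEquivRight fun p => by
        simp only [hA, hB, Set.mem_inter_iff, Set.mem_setOf_eq]; tauto
    have e1 := phiEquiv (n := n) f1 s1 hss1 hfix1 hsub1 hD1 P Q hQ1 hQ1' (Touch f2) hE12
    have e2 : {p : Fin (n + 1) → ℤ × ℤ // (IsWalk n P (s1 Q) p ∧ Touch f1 p) ∧ Touch f2 p} ≃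
        {p : Fin (n + 1) → ℤ × ℤ // (IsWalk n P (s1 Q) p ∧ Touch f2 p) ∧ True} :=
      Equiv.subtypeEquivRight fun p =>
        ⟨fun h => ⟨⟨h.1.1, h.2⟩, trivial⟩, fun h => ⟨⟨h.1.1, auto1 p h.1.1⟩, h.1.2⟩⟩
    have e3 := phiEquiv (n := n) f2 s2 hss2 hfix2 hsub2 hD2 P (s1 Q) hQ12 hQ12' (fun _ => True)
      (fun _ _ h => h)
    have e4 : {p : Fin (n + 1) → ℤ × ℤ // (IsWalk n P (s2 (s1 Q)) p ∧ Touch f2 p) ∧ True} ≃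
        {p : Fin (n + 1) → ℤ × ℤ // IsWalk n P (s2 (s1 Q)) p} :=
      Equiv.subtypeEquivRight fun p =>
        ⟨fun h => h.1.1, fun h => ⟨⟨h, auto2 _ (by have := hQ.2; simp only [f2, s2, s1]; omega)
          p h⟩, trivial⟩⟩
    rw [Nat.card_congr ((((e0.trans e1).trans e2).trans e3).trans e4)]
    rfl
  have hNW : N P Q n = W.ncard := by
    rw [← Nat.card_coe_set_eq]; rfl
  have hNgG : Ng P Q n = G.ncard := by
    rw [← Nat.card_coe_set_eq]; rfl
  have key1 : (W \ G).ncard + G.ncard = W.ncard :=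
    Set.ncard_diff_add_ncard_of_subset hGW hWfin
  have key2 : (A ∪ B).ncard + (A ∩ B).ncard = A.ncard + B.ncard :=
    Set.ncard_union_add_ncard_inter A B hAfin hBfin
  rw [hdiff] at key1
  rw [hNW, hNgG, ← cardA, ← cardB, ← cardAB]
  omega
end

section
/- Let P, Q ∈ ℤ² be points both of whose coordinates are ≥ 1, and let n ≥ 0. Then the numbers of bad walks of length n satisfy the reflection identity N_b(P,Q;n) + N_b(P,r(Q);n) = N_b(P,r₁(Q);n) + N_b(P,r₂(Q);n). -/
/-- A bad walk: a walk which is not good, i.e. some point of it fails to have both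
coordinates `≥ 1`. -/
def IsBadWalk (n : ℕ) (P Q : ℤ × ℤ) (p : Fin (n + 1) → ℤ × ℤ) : Prop :=
  IsWalk n P Q p ∧ ¬ ∀ i, 1 ≤ (p i).1 ∧ 1 ≤ (p i).2

/-- `Nb P Q n`: the number of bad walks of length `n` from `P` to `Q`. -/
noncomputable def Nb (P Q : ℤ × ℤ) (n : ℕ) : ℕ :=
  Nat.card {p : Fin (n + 1) → ℤ × ℤ // IsBadWalk n P Q p}

namespace BadWalkRefl

/-- Reflection in the vertical axis. -/
def rf1 (z : ℤ × ℤ) : ℤ × ℤ := (-z.1, z.2)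

/-- Reflection in the horizontal axis. -/
def rf2 (z : ℤ × ℤ) : ℤ × ℤ := (z.1, -z.2)

lemma rf1_sub (a b : ℤ × ℤ) : rf1 a - rf1 b = rf1 (a - b) := by
  simp [rf1, Prod.ext_iff]; ring

lemma rf2_sub (a b : ℤ × ℤ) : rf2 a - rf2 b = rf2 (a - b) := by
  simp [rf2, Prod.ext_iff]; ring

lemma rf1_steps {d : ℤ × ℤ} (hd : d ∈ ({(1, 0), (-1, 0), (0, 1), (0, -1)} : Set (ℤ × ℤ))) :
    rf1 d ∈ ({(1, 0), (-1, 0), (0, 1), (0, -1)} : Set (ℤ × ℤ)) := by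
  simp only [Set.mem_insert_iff, Set.mem_singleton_iff] at hd ⊢
  rcases hd with h | h | h | h <;> subst h <;> simp [rf1]

lemma rf2_steps {d : ℤ × ℤ} (hd : d ∈ ({(1, 0), (-1, 0), (0, 1), (0, -1)} : Set (ℤ × ℤ))) :
    rf2 d ∈ ({(1, 0), (-1, 0), (0, 1), (0, -1)} : Set (ℤ × ℤ)) := by
  simp only [Set.mem_insert_iff, Set.mem_singleton_iff] at hd ⊢
  rcases hd with h | h | h | h <;> subst h <;> simp [rf2]

lemma rf1_rf1 (z : ℤ × ℤ) : rf1 (rf1 z) = z := by simp [rf1]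

lemma rf2_rf2 (z : ℤ × ℤ) : rf2 (rf2 z) = z := by simp [rf2]

/-- The first index at which a walk is "bad". -/
noncomputable def firstBad (n : ℕ) (p : Fin (n + 1) → ℤ × ℤ)
    (h : ∃ i, ¬ (1 ≤ (p i).1 ∧ 1 ≤ (p i).2)) : Fin (n + 1) :=
  (Finset.univ.filter fun i => ¬ (1 ≤ (p i).1 ∧ 1 ≤ (p i).2)).min'
    (by obtain ⟨i, hi⟩ := h; exact ⟨i, Finset.mem_filter.mpr ⟨Finset.mem_univ i, hi⟩⟩)

lemma firstBad_bad (n : ℕ) (p : Fin (n + 1) → ℤ × ℤ)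
    (h : ∃ i, ¬ (1 ≤ (p i).1 ∧ 1 ≤ (p i).2)) :
    ¬ (1 ≤ (p (firstBad n p h)).1 ∧ 1 ≤ (p (firstBad n p h)).2) := by
  have := Finset.min'_mem (Finset.univ.filter fun i => ¬ (1 ≤ (p i).1 ∧ 1 ≤ (p i).2))
    (by obtain ⟨i, hi⟩ := h; exact ⟨i, Finset.mem_filter.mpr ⟨Finset.mem_univ i, hi⟩⟩)
  exact (Finset.mem_filter.mp this).2

lemma firstBad_min (n : ℕ) (p : Fin (n + 1) → ℤ × ℤ)
    (h : ∃ i, ¬ (1 ≤ (p i).1 ∧ 1 ≤ (p i).2)) (j : Fin (n + 1))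
    (hj : ¬ (1 ≤ (p j).1 ∧ 1 ≤ (p j).2)) : firstBad n p h ≤ j :=
  Finset.min'_le _ _ (Finset.mem_filter.mpr ⟨Finset.mem_univ j, hj⟩)

lemma good_of_lt_firstBad (n : ℕ) (p : Fin (n + 1) → ℤ × ℤ)
    (h : ∃ i, ¬ (1 ≤ (p i).1 ∧ 1 ≤ (p i).2)) (j : Fin (n + 1))
    (hj : j < firstBad n p h) : 1 ≤ (p j).1 ∧ 1 ≤ (p j).2 := by
  by_contra hc
  exact absurd (firstBad_min n p h j hc) (not_le.mpr hj)

/-- The reflected walk: reflect every point from the first bad index on, in the axis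
that the walk first touches. -/
noncomputable def flipw (n : ℕ) (p : Fin (n + 1) → ℤ × ℤ) : Fin (n + 1) → ℤ × ℤ :=
  if h : ∃ i, ¬ (1 ≤ (p i).1 ∧ 1 ≤ (p i).2) then
    fun i => if i < firstBad n p h then p i
      else (if (p (firstBad n p h)).1 ≤ 0 then rf1 else rf2) (p i)
  else p

lemma flipw_eq (n : ℕ) (p : Fin (n + 1) → ℤ × ℤ)
    (h : ∃ i, ¬ (1 ≤ (p i).1 ∧ 1 ≤ (p i).2)) :
    flipw n p = fun i => if i < firstBad n p h then p i
      else (if (p (firstBad n p h)).1 ≤ 0 then rf1 else rf2) (p i) :=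
  dif_pos h

lemma firstBad_pos {n : ℕ} {P E : ℤ × ℤ} {p : Fin (n + 1) → ℤ × ℤ}
    (hw : IsWalk n P E p) (hP : 1 ≤ P.1 ∧ 1 ≤ P.2)
    (h : ∃ i, ¬ (1 ≤ (p i).1 ∧ 1 ≤ (p i).2)) : 0 < firstBad n p h := by
  apply Fin.pos_iff_ne_zero.mpr
  intro h0
  have := firstBad_bad n p h
  rw [h0, hw.1] at this
  exact this hP

/-- The point at the first bad index has exactly one coordinate equal to `0`, the
other being `≥ 1`. -/
lemma atFirstBad {n : ℕ} {P E : ℤ × ℤ} {p : Fin (n + 1) → ℤ × ℤ}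
    (hw : IsWalk n P E p) (hP : 1 ≤ P.1 ∧ 1 ≤ P.2)
    (h : ∃ i, ¬ (1 ≤ (p i).1 ∧ 1 ≤ (p i).2)) :
    ((p (firstBad n p h)).1 = 0 ∧ 1 ≤ (p (firstBad n p h)).2) ∨
      ((p (firstBad n p h)).2 = 0 ∧ 1 ≤ (p (firstBad n p h)).1) := by
  have hbad := firstBad_bad n p h
  have hpos := firstBad_pos hw hP h
  have hk1 : (firstBad n p h).val ≠ 0 := by
    intro h0
    rw [Fin.lt_def] at hpos
    omega
  have hkn : (firstBad n p h).val < n + 1 := (firstBad n p h).isLt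
  set j : Fin n := ⟨(firstBad n p h).val - 1, by omega⟩ with hj
  have hjs : j.succ = firstBad n p h := by
    apply Fin.ext
    simp [hj, Fin.val_succ]
    omega
  have hjc : j.castSucc < firstBad n p h := by
    rw [Fin.lt_def]
    simp [hj]
    omega
  have hgood := good_of_lt_firstBad n p h j.castSucc hjc
  have hstep := hw.2.2 j
  rw [hjs] at hstep
  simp only [Set.mem_insert_iff, Set.mem_singleton_iff, Prod.ext_iff, Prod.fst_sub,
    Prod.snd_sub] at hstep
  omega

/-- Reflecting the tail of a walk from index `i₀` on gives a walk. -/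
lemma walk_reflect {n : ℕ} {P E : ℤ × ℤ} {p : Fin (n + 1) → ℤ × ℤ}
    (hw : IsWalk n P E p) (i₀ : Fin (n + 1)) (h0 : 0 < i₀)
    (σ : ℤ × ℤ → ℤ × ℤ) (hσfix : σ (p i₀) = p i₀)
    (hσsub : ∀ a b, σ a - σ b = σ (a - b))
    (hσS : ∀ d ∈ ({(1, 0), (-1, 0), (0, 1), (0, -1)} : Set (ℤ × ℤ)),
      σ d ∈ ({(1, 0), (-1, 0), (0, 1), (0, -1)} : Set (ℤ × ℤ))) :
    IsWalk n P (σ E) (fun i => if i < i₀ then p i else σ (p i)) := by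
  refine ⟨?_, ?_, ?_⟩
  · simp only [if_pos h0]
    exact hw.1
  · have hl : ¬ (Fin.last n < i₀) := not_lt.mpr (Fin.le_last i₀)
    simp only [if_neg hl, hw.2.1]
  · intro i
    by_cases h1 : i.succ < i₀
    · have h2 : i.castSucc < i₀ := lt_trans (Fin.castSucc_lt_succ (i := i)) h1
      simpa only [if_pos h1, if_pos h2] using hw.2.2 i
    · by_cases h2 : i.castSucc < i₀
      · have he : i₀ = i.succ :=
          le_antisymm (not_lt.mp h1) (Fin.castSucc_lt_iff_succ_le.mp h2)
        have hfix : σ (p i.succ) = p i.succ := by rw [← he]; exact hσfix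
        simpa only [if_neg h1, if_pos h2, hfix] using hw.2.2 i
      · simp only [if_neg h1, if_neg h2, hσsub]
        exact hσS _ (hw.2.2 i)

lemma sigma_fix {n : ℕ} {P E : ℤ × ℤ} {p : Fin (n + 1) → ℤ × ℤ}
    (hw : IsWalk n P E p) (hP : 1 ≤ P.1 ∧ 1 ≤ P.2)
    (h : ∃ i, ¬ (1 ≤ (p i).1 ∧ 1 ≤ (p i).2)) :
    (if (p (firstBad n p h)).1 ≤ 0 then rf1 else rf2) (p (firstBad n p h))
      = p (firstBad n p h) := by
  rcases atFirstBad hw hP h with ⟨h1, h2⟩ | ⟨h1, h2⟩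
  · rw [if_pos (by omega)]
    simp [rf1, Prod.ext_iff, h1]
  · rw [if_neg (by omega)]
    simp [rf2, Prod.ext_iff, h1]

/-- The reflected walk is a bad walk to `rf1 E` or to `rf2 E`. -/
lemma flipw_isBadWalk {n : ℕ} {P E : ℤ × ℤ} {p : Fin (n + 1) → ℤ × ℤ}
    (hp : IsBadWalk n P E p) (hP : 1 ≤ P.1 ∧ 1 ≤ P.2) :
    IsBadWalk n P (rf1 E) (flipw n p) ∨ IsBadWalk n P (rf2 E) (flipw n p) := by
  obtain ⟨hw, hb⟩ := hp
  have h : ∃ i, ¬ (1 ≤ (p i).1 ∧ 1 ≤ (p i).2) := by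
    push_neg at hb
    obtain ⟨i, hi⟩ := hb
    exact ⟨i, by intro hc; exact absurd hc.2 (not_le.mpr (hi hc.1))⟩
  rw [flipw_eq n p h]
  have hfix := sigma_fix hw hP h
  have hpos := firstBad_pos hw hP h
  have hbadpt := firstBad_bad n p h
  by_cases hc : (p (firstBad n p h)).1 ≤ 0
  · left
    rw [if_pos hc] at hfix ⊢
    refine ⟨walk_reflect hw _ hpos rf1 hfix rf1_sub (fun d hd => rf1_steps hd), ?_⟩
    intro hall
    have := hall (firstBad n p h)
    simp only [lt_irrefl, if_neg (lt_irrefl _), hfix] at this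
    exact hbadpt this
  · right
    rw [if_neg hc] at hfix ⊢
    refine ⟨walk_reflect hw _ hpos rf2 hfix rf2_sub (fun d hd => rf2_steps hd), ?_⟩
    intro hall
    have := hall (firstBad n p h)
    simp only [lt_irrefl, if_neg (lt_irrefl _), hfix] at this
    exact hbadpt this

/-- `flip` is an involution on bad walks starting from a good point. -/
lemma flipw_flipw {n : ℕ} {P E : ℤ × ℤ} {p : Fin (n + 1) → ℤ × ℤ}
    (hp : IsBadWalk n P E p) (hP : 1 ≤ P.1 ∧ 1 ≤ P.2) :
    flipw n (flipw n p) = p := by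
  obtain ⟨hw, hb⟩ := hp
  have h : ∃ i, ¬ (1 ≤ (p i).1 ∧ 1 ≤ (p i).2) := by
    push_neg at hb
    obtain ⟨i, hi⟩ := hb
    exact ⟨i, by intro hc; exact absurd hc.2 (not_le.mpr (hi hc.1))⟩
  have hfix := sigma_fix hw hP h
  set i₀ := firstBad n p h with hi₀
  set σ := if (p i₀).1 ≤ 0 then rf1 else rf2 with hσ
  have hq : flipw n p = fun i => if i < i₀ then p i else σ (p i) := flipw_eq n p h
  set q := flipw n p with hqdef
  have hq0 : q i₀ = p i₀ := by
    rw [hq]; simp only [if_neg (lt_irrefl i₀), hfix]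
  have hqlt : ∀ j, j < i₀ → q j = p j := by
    intro j hj
    rw [hq]; simp only [if_pos hj]
  have h' : ∃ i, ¬ (1 ≤ (q i).1 ∧ 1 ≤ (q i).2) := ⟨i₀, by rw [hq0]; exact firstBad_bad n p h⟩
  have hfb : firstBad n q h' = i₀ := by
    apply le_antisymm
    · exact firstBad_min n q h' i₀ (by rw [hq0]; exact firstBad_bad n p h)
    · by_contra hlt
      rw [not_le] at hlt
      have hbad' := firstBad_bad n q h'
      rw [hqlt _ hlt] at hbad'
      exact hbad' (good_of_lt_firstBad n p h _ hlt)
  have hσσ : ∀ z, σ (σ z) = z := by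
    rw [hσ]; split
    · exact rf1_rf1
    · exact rf2_rf2
  rw [flipw_eq n q h', hfb, hq0]
  funext i
  by_cases hi : i < i₀
  · simp only [if_pos hi, hqlt _ hi]
  · have hqi : q i = σ (p i) := by rw [hq]; simp only [if_neg hi]
    simp only [if_neg hi, hqi, ← hσ, hσσ]

/-- A walk is determined by its starting point and its steps. -/
lemma walk_ext {n : ℕ} {p q : Fin (n + 1) → ℤ × ℤ} (h0 : p 0 = q 0)
    (hs : ∀ i : Fin n, p i.succ - p i.castSucc = q i.succ - q i.castSucc) : p = q := by
  suffices H : ∀ k (hk : k < n + 1), p ⟨k, hk⟩ = q ⟨k, hk⟩ by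
    funext i
    exact H i.1 i.2
  intro k
  induction k with
  | zero => intro hk; exact h0
  | succ m ih =>
    intro hk
    have hm : m < n := by omega
    have h1 := hs ⟨m, hm⟩
    have h2 := ih (by omega)
    have e1 : (⟨m, hm⟩ : Fin n).succ = ⟨m + 1, hk⟩ := rfl
    have e2 : (⟨m, hm⟩ : Fin n).castSucc = ⟨m, by omega⟩ := rfl
    rw [e1, e2, h2] at h1
    exact sub_left_inj.mp h1

/-- There are finitely many walks of length `n` from `P` to `E`. -/
lemma finite_walks (n : ℕ) (P E : ℤ × ℤ) :
    Finite {p : Fin (n + 1) → ℤ × ℤ // IsWalk n P E p} := by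
  have hS : (({(1, 0), (-1, 0), (0, 1), (0, -1)} : Set (ℤ × ℤ))).Finite :=
    (Set.finite_singleton _).insert _ |>.insert _ |>.insert _
  haveI : Finite ({(1, 0), (-1, 0), (0, 1), (0, -1)} : Set (ℤ × ℤ)) := hS.to_subtype
  apply Finite.of_injective
    (fun x : {p : Fin (n + 1) → ℤ × ℤ // IsWalk n P E p} =>
      (fun i : Fin n => (⟨x.1 i.succ - x.1 i.castSucc, x.2.2.2 i⟩ :
        ({(1, 0), (-1, 0), (0, 1), (0, -1)} : Set (ℤ × ℤ)))))
  intro a b hab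
  apply Subtype.ext
  apply walk_ext (by rw [a.2.1, b.2.1])
  intro i
  have h1 := congrFun hab i
  exact Subtype.ext_iff.mp h1

lemma finite_badWalks (n : ℕ) (P E : ℤ × ℤ) :
    Finite {p : Fin (n + 1) → ℤ × ℤ // IsBadWalk n P E p} := by
  haveI := finite_walks n P E
  apply Finite.of_injective
    (fun x : {p : Fin (n + 1) → ℤ × ℤ // IsBadWalk n P E p} =>
      (⟨x.1, x.2.1⟩ : {p : Fin (n + 1) → ℤ × ℤ // IsWalk n P E p}))
  intro a b hab
  have h2 : a.1 = b.1 := congrArg (Subtype.val : {p : Fin (n + 1) → ℤ × ℤ // IsWalk n P E p} → _) hab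
  exact Subtype.ext h2

end BadWalkRefl

open BadWalkRefl in
/-- The reflection identity for bad walks:
`N_b(P,Q;n) + N_b(P,r(Q);n) = N_b(P,r₁(Q);n) + N_b(P,r₂(Q);n)`, where
`r₁(x,y) = (−x,y)`, `r₂(x,y) = (x,−y)` and `r(x,y) = (−x,−y)`. -/
theorem card_badWalks_reflection (P Q : ℤ × ℤ)
    (hP : 1 ≤ P.1 ∧ 1 ≤ P.2) (hQ : 1 ≤ Q.1 ∧ 1 ≤ Q.2) (n : ℕ) :
    Nb P Q n + Nb P (-Q.1, -Q.2) n = Nb P (-Q.1, Q.2) n + Nb P (Q.1, -Q.2) n := by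
  classical
  set A := fun p : Fin (n + 1) → ℤ × ℤ => IsBadWalk n P Q p with hA
  set B := fun p : Fin (n + 1) → ℤ × ℤ => IsBadWalk n P (-Q.1, -Q.2) p with hB
  set C := fun p : Fin (n + 1) → ℤ × ℤ => IsBadWalk n P (-Q.1, Q.2) p with hC
  set D := fun p : Fin (n + 1) → ℤ × ℤ => IsBadWalk n P (Q.1, -Q.2) p with hD
  haveI := finite_badWalks n P Q
  haveI := finite_badWalks n P (-Q.1, -Q.2)
  haveI := finite_badWalks n P (-Q.1, Q.2)
  haveI := finite_badWalks n P (Q.1, -Q.2)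
  have hrf1Q : rf1 Q = (-Q.1, Q.2) := rfl
  have hrf2Q : rf2 Q = (Q.1, -Q.2) := rfl
  have hrf1r : rf1 (-Q.1, -Q.2) = (Q.1, -Q.2) := by simp [rf1]
  have hrf2r : rf2 (-Q.1, -Q.2) = (-Q.1, Q.2) := by simp [rf2]
  have hrf1c : rf1 (-Q.1, Q.2) = Q := by simp [rf1]
  have hrf2c : rf2 (-Q.1, Q.2) = (-Q.1, -Q.2) := rfl
  have hrf1d : rf1 (Q.1, -Q.2) = (-Q.1, -Q.2) := rfl
  have hrf2d : rf2 (Q.1, -Q.2) = Q := by simp [rf2]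
  -- the main equivalence
  have e : {p : Fin (n + 1) → ℤ × ℤ // A p ∨ B p} ≃ {p : Fin (n + 1) → ℤ × ℤ // C p ∨ D p} :=
    { toFun := fun x => ⟨flipw n x.1, by
        rcases x.2 with hx | hx
        · rcases flipw_isBadWalk hx hP with h' | h'
          · rw [hrf1Q] at h'; exact Or.inl h'
          · rw [hrf2Q] at h'; exact Or.inr h'
        · rcases flipw_isBadWalk hx hP with h' | h'
          · rw [hrf1r] at h'; exact Or.inr h'
          · rw [hrf2r] at h'; exact Or.inl h'⟩
      invFun := fun y => ⟨flipw n y.1, by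
        rcases y.2 with hy | hy
        · rcases flipw_isBadWalk hy hP with h' | h'
          · rw [hrf1c] at h'; exact Or.inl h'
          · rw [hrf2c] at h'; exact Or.inr h'
        · rcases flipw_isBadWalk hy hP with h' | h'
          · rw [hrf1d] at h'; exact Or.inr h'
          · rw [hrf2d] at h'; exact Or.inl h'⟩
      left_inv := fun x => by
        apply Subtype.ext
        rcases x.2 with hx | hx
        · exact flipw_flipw hx hP
        · exact flipw_flipw hx hP
      right_inv := fun y => by
        apply Subtype.ext
        rcases y.2 with hy | hy
        · exact flipw_flipw hy hP
        · exact flipw_flipw hy hP }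
  have hAB : Disjoint A B := by
    rw [Pi.disjoint_iff]
    intro p
    rw [Prop.disjoint_iff]
    rintro ⟨ha, hb⟩
    have h1 : Q = (-Q.1, -Q.2) := ha.1.2.1.symm.trans hb.1.2.1
    have := congrArg Prod.fst h1
    simp at this
    omega
  have hCD : Disjoint C D := by
    rw [Pi.disjoint_iff]
    intro p
    rw [Prop.disjoint_iff]
    rintro ⟨hc, hd⟩
    have h1 : ((-Q.1 : ℤ), Q.2) = ((Q.1 : ℤ), -Q.2) := hc.1.2.1.symm.trans hd.1.2.1
    have := congrArg Prod.fst h1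
    simp at this
    omega
  have key : Nat.card {p : Fin (n + 1) → ℤ × ℤ // A p ∨ B p}
      = Nat.card {p : Fin (n + 1) → ℤ × ℤ // C p ∨ D p} := Nat.card_congr e
  rw [Nat.card_congr (subtypeOrEquiv A B hAB), Nat.card_congr (subtypeOrEquiv C D hCD),
    Nat.card_sum, Nat.card_sum] at key
  exact key
end

section
/- Let f ∈ ℚ[[t]] be the formal power series f(t) = Σ_{n≥0} f_n t^n with coefficients f_n = (1/(n+1))·binomial(3n+1, n). Then f satisfies the cubic equation f·(1 − t·f)² = 1 in ℚ[[t]]. (In the paper, f_n is the number of planar Morse profiles with 2n+2 vertices.) -/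
/-- The generating series of the numbers of planar Morse profiles:
`f = Σ_{n≥0} f_n t^n` with `f_n = (1/(n+1))·binom(3n+1, n)`. -/
noncomputable def morseProfileSeries : PowerSeries ℚ :=
  PowerSeries.mk fun n => (1 / (n + 1 : ℚ)) * ((3 * n + 1).choose n : ℚ)

namespace MorseAux

open PowerSeries Finset

/-- Ternary (Fuss–Catalan) numbers, defined by the recursion for ternary trees. -/
def tern : ℕ → ℚ
  | 0 => 1
  | n + 1 =>
    ∑ i : Fin n.succ, ∑ j : Fin (n - i).succ, tern i * (tern j * tern (n - i - j))
  decreasing_by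
  · exact i.isLt
  · have := j.isLt; omega
  · omega

theorem tern_zero : tern 0 = 1 := by rw [tern]

theorem tern_succ (n : ℕ) :
    tern (n + 1) =
      ∑ ij ∈ antidiagonal n, tern ij.1 *
        ∑ kl ∈ antidiagonal ij.2, tern kl.1 * tern kl.2 := by
  rw [tern]
  rw [Finset.Nat.sum_antidiagonal_eq_sum_range_succ
    (fun x y => tern x * ∑ kl ∈ antidiagonal y, tern kl.1 * tern kl.2) n, Finset.sum_range]
  refine Finset.sum_congr rfl fun i _ => ?_
  rw [Finset.Nat.sum_antidiagonal_eq_sum_range_succ (fun x y => tern x * tern y) (n - i),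
    Finset.sum_range, Finset.mul_sum]

theorem tern_one : tern 1 = 1 := by
  simp [tern_succ, tern_zero]


theorem tern_two : tern 2 = 3 := by
  rw [show (2:ℕ) = 1 + 1 from rfl, tern_succ]
  norm_num [Finset.Nat.sum_antidiagonal_eq_sum_range_succ_mk, Finset.sum_range_succ,
    tern_zero, tern_one]

/-- The generating series of ternary trees. -/
noncomputable def U : PowerSeries ℚ := PowerSeries.mk tern

theorem hU : U = 1 + X * (U * (U * U)) := by
  ext n
  cases n with
  | zero =>
      simp [U, coeff_zero_eq_constantCoeff, tern_zero]
  | succ n =>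
      rw [map_add, coeff_succ_X_mul]
      simp only [U, coeff_mk, coeff_mul, coeff_one, Nat.succ_ne_zero, if_false, zero_add]
      rw [tern_succ]

/-- The square of the ternary-tree series: our candidate solution. -/
noncomputable def g : PowerSeries ℚ := U * U

theorem hUnit : U * (1 - X * (U * U)) = 1 := by
  linear_combination hU

theorem hg1 : g * (1 - X * g) ^ 2 = 1 := by
  show (U * U) * (1 - X * (U * U)) ^ 2 = 1
  linear_combination (U * (1 - X*(U*U)) + 1) * hUnit

theorem coeff_g_zero : (coeff 0) g = 1 := by
  simp [g, U, coeff_mul, tern_zero]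

theorem coeff_g_one : (coeff 1) g = 2 := by
  rw [g, coeff_mul]
  norm_num [Finset.Nat.sum_antidiagonal_eq_sum_range_succ_mk, Finset.sum_range_succ,
    U, tern_zero, tern_one]

theorem coeff_g_two : (coeff 2) g = 7 := by
  rw [g, coeff_mul]
  norm_num [Finset.Nat.sum_antidiagonal_eq_sum_range_succ_mk, Finset.sum_range_succ,
    U, tern_zero, tern_one, tern_two]

theorem derivative_ofNat (n : ℕ) [n.AtLeastTwo] :
    d⁄dX ℚ (OfNat.ofNat n : ℚ⟦X⟧) = 0 := by
  rw [← map_ofNat (C (R := ℚ)) n]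
  exact derivative_C

theorem h2 : d⁄dX ℚ g * (1 - 3*X*g) = 2*g^2 := by
  have h0 : d⁄dX ℚ (g * ((1 - X*g)*(1 - X*g))) = 0 := by
    rw [show g * ((1 - X*g)*(1 - X*g)) = g * (1-X*g)^2 by ring, hg1]
    exact Derivation.map_one_eq_zero _
  simp only [Derivation.leibniz, map_sub, Derivation.map_one_eq_zero, derivative_X,
    smul_eq_mul, mul_one] at h0
  have key : (d⁄dX ℚ g * (1 - 3*X*g) - 2*g^2) * (1 - X*g) = 0 := by
    linear_combination h0
  have hne : (1 - X*g : ℚ⟦X⟧) ≠ 0 := by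
    intro h
    have := congrArg (constantCoeff) h
    simp at this
  exact sub_eq_zero.mp ((mul_eq_zero.mp key).resolve_right hne)

theorem h3 : d⁄dX ℚ (d⁄dX ℚ g) * (1 - 3*X*g)
    = 7 * g * d⁄dX ℚ g + 3 * X * (d⁄dX ℚ g)^2 := by
  have h2' : d⁄dX ℚ g - (X*g) * d⁄dX ℚ g - (X*g) * d⁄dX ℚ g - (X*g) * d⁄dX ℚ g
      = g*g + g*g := by linear_combination h2
  have h0 := congrArg (d⁄dX ℚ) h2'
  simp only [Derivation.leibniz, map_sub, map_add, Derivation.map_one_eq_zero, derivative_X,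
    smul_eq_mul, mul_one] at h0
  linear_combination h0

theorem hODE :
    (4*X^2 - 27*X^3) * d⁄dX ℚ (d⁄dX ℚ g) + (10*X - 81*X^2) * d⁄dX ℚ g + (2 - 24*X) * g
      = 2 := by
  set g1 := d⁄dX ℚ g with hg1def
  set g2 := d⁄dX ℚ g1 with hg2def
  have hne : ((1 - 3*X*g : ℚ⟦X⟧))^3 ≠ 0 := by
    apply pow_ne_zero
    intro h
    have := congrArg (constantCoeff) h
    simp at this
  apply mul_right_cancel₀ hne
  have hh2 := h2
  have hh3 := h3
  rw [← hg1def] at hh2 hh3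
  rw [← hg2def] at hh3
  linear_combination ((4*X^2-27*X^3) * (1-3*X*g)^2) * hh3 +
    ((4*X^2-27*X^3) * (7*g*(1-3*X*g) + 3*X*((1-3*X*g)*g1 + 2*g^2)) +
      (10*X-81*X^2) * (1-3*X*g)^2) * hh2 +
    (2 + 6*X*g) * hg1

theorem hODE2 :
    X*(X*(C 4 * d⁄dX ℚ (d⁄dX ℚ g))) + X*(C 10 * d⁄dX ℚ g) + C 2 * g
      = X*(X*(X*(C 27 * d⁄dX ℚ (d⁄dX ℚ g)))) + X*(X*(C 81 * d⁄dX ℚ g))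
        + X*(C 24 * g) + C 2 := by
  rw [map_ofNat (C (R := ℚ)) 4, map_ofNat (C (R := ℚ)) 10, map_ofNat (C (R := ℚ)) 2, map_ofNat (C (R := ℚ)) 27,
    map_ofNat (C (R := ℚ)) 81, map_ofNat (C (R := ℚ)) 24]
  linear_combination hODE

theorem grecAll (n : ℕ) :
    2*((n:ℚ)+2)*(2*(n:ℚ)+3) * coeff (n+1) g
      = 3*(3*(n:ℚ)+2)*(3*(n:ℚ)+4) * coeff n g := by
  match n with
  | 0 => rw [coeff_g_one, coeff_g_zero]; norm_num
  | 1 => rw [coeff_g_two, coeff_g_one]; norm_num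
  | (m+2) =>
    have h := congrArg (coeff (m+3)) hODE2
    simp only [map_add, show m+3 = m+2+1 from rfl, coeff_succ_X_mul] at h
    simp only [show m+2 = m+1+1 from rfl, coeff_succ_X_mul] at h
    simp only [coeff_succ_X_mul, coeff_C_mul, coeff_derivative, coeff_C] at h
    norm_num at h
    push_cast
    linear_combination h

end MorseAux

open MorseAux PowerSeries in
theorem chooseId (n : ℕ) :
    ((3*n+4).choose (n+1) : ℚ) * (2*(2*(n:ℚ)+3)*((n:ℚ)+1))
      = ((3*n+1).choose n : ℚ) * (3*(3*(n:ℚ)+2)*(3*(n:ℚ)+4)) := by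
  have h1 : (n+1) ≤ 3*n+4 := by omega
  have h2 : n ≤ 3*n+1 := by omega
  rw [Nat.cast_choose ℚ h1, Nat.cast_choose ℚ h2,
    show 3*n+4-(n+1) = 2*n+3 from by omega, show 3*n+1-n = 2*n+1 from by omega]
  have e1 : ((Nat.factorial (3*n+4) : ℕ) : ℚ)
      = (3*(n:ℚ)+4)*((3*(n:ℚ)+3)*((3*(n:ℚ)+2)*((Nat.factorial (3*n+1) : ℕ) : ℚ))) := by
    rw [show (3*n+4) = (3*n+3)+1 from rfl, Nat.factorial_succ,
      show (3*n+3) = (3*n+2)+1 from rfl, Nat.factorial_succ,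
      show (3*n+2) = (3*n+1)+1 from rfl, Nat.factorial_succ]
    push_cast; ring
  have e2 : ((Nat.factorial (2*n+3) : ℕ) : ℚ) = (2*(n:ℚ)+3)*((2*(n:ℚ)+2)*((Nat.factorial (2*n+1) : ℕ) : ℚ)) := by
    rw [show (2*n+3) = (2*n+2)+1 from rfl, Nat.factorial_succ,
      show (2*n+2) = (2*n+1)+1 from rfl, Nat.factorial_succ]
    push_cast; ring
  have e3 : ((Nat.factorial (n+1) : ℕ) : ℚ) = ((n:ℚ)+1)*((Nat.factorial n : ℕ) : ℚ) := by
    rw [Nat.factorial_succ]; push_cast; ring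
  rw [e1, e2, e3]
  have z1 : ((Nat.factorial (3*n+1) : ℕ) : ℚ) ≠ 0 := Nat.cast_ne_zero.mpr (Nat.factorial_ne_zero _)
  have z2 : ((Nat.factorial (2*n+1) : ℕ) : ℚ) ≠ 0 := Nat.cast_ne_zero.mpr (Nat.factorial_ne_zero _)
  have z3 : ((Nat.factorial n : ℕ) : ℚ) ≠ 0 := Nat.cast_ne_zero.mpr (Nat.factorial_ne_zero _)
  have z4 : ((n:ℚ)+1) ≠ 0 := by positivity
  have z5 : (2*(n:ℚ)+2) ≠ 0 := by positivity
  have z6 : (2*(n:ℚ)+3) ≠ 0 := by positivity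
  have z7 : (3*(n:ℚ)+4) ≠ 0 := by positivity
  field_simp

open MorseAux PowerSeries in
theorem frecAll (n : ℕ) :
    2*((n:ℚ)+2)*(2*(n:ℚ)+3) * coeff (n+1) morseProfileSeries
      = 3*(3*(n:ℚ)+2)*(3*(n:ℚ)+4) * coeff n morseProfileSeries := by
  simp only [morseProfileSeries, coeff_mk]
  rw [show 3*(n+1)+1 = 3*n+4 from by omega]
  have key := chooseId n
  have z1 : ((n:ℚ)+1) ≠ 0 := by positivity
  have z2 : ((n:ℚ)+1+1) ≠ 0 := by positivity
  push_cast
  field_simp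
  linear_combination ((n:ℚ)+1+1) * key

open MorseAux PowerSeries in
theorem coeff_eq : ∀ n, coeff n morseProfileSeries = coeff n MorseAux.g
  | 0 => by
      rw [coeff_g_zero]
      simp [morseProfileSeries]
  | (n+1) => by
      have h1 := frecAll n
      have h2 := grecAll n
      rw [coeff_eq n] at h1
      have hne : (2*((n:ℚ)+2)*(2*(n:ℚ)+3)) ≠ 0 := by positivity
      exact mul_left_cancel₀ hne (h1.trans h2.symm)

/-- The series `f(t) = Σ_{n≥0} (1/(n+1))·binom(3n+1,n) t^n` satisfies the cubic equation
`f·(1 − t·f)² = 1` in `ℚ[[t]]`. -/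
theorem morseProfileSeries_cubic :
    morseProfileSeries * (1 - PowerSeries.X * morseProfileSeries) ^ 2 = 1 := by
  have : morseProfileSeries = MorseAux.g := PowerSeries.ext coeff_eq
  rw [this]
  exact MorseAux.hg1
end

section
/- The formal power series W = Σ_{n≥1} (1/n)·binomial(3n−2, n−1)·t^n ∈ ℚ[[t]] is the compositional inverse of Z(X) = X·(1−X)²; that is, substituting W into Z gives W·(1−W)² = t, and substituting Z into W gives back X. -/
open PowerSeries Finset Nat

/-- The power series `W = Σ_{n≥1} (1/n)·binom(3n−2, n−1) t^n ∈ ℚ[[t]]`. -/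
noncomputable def Wseries : PowerSeries ℚ :=
  PowerSeries.mk fun n => if n = 0 then 0 else (1 / (n : ℚ)) * ((3 * n - 2).choose (n - 1) : ℚ)

/-- Composition (substitution) `w ∘ z` of formal power series over `ℚ`; this is the
correct notion of substituting `z` into `w` whenever `z` has zero constant term, since then
`z^k` has order at least `k`, so the `n`-th coefficient of `Σ_k w_k z^k` is the finite sum
`Σ_{k ≤ n} w_k · coeff n (z^k)`. -/
noncomputable def psComp (w z : PowerSeries ℚ) : PowerSeries ℚ :=
  PowerSeries.mk fun n => ∑ k ∈ Finset.range (n + 1),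
    (PowerSeries.coeff (R := ℚ) k w) * (PowerSeries.coeff (R := ℚ) n (z ^ k))


section CompHom
variable {z : ℚ⟦X⟧} (hz : constantCoeff (R := ℚ) z = 0)

lemma coeff_pow_z_eq_zero (hz : constantCoeff (R := ℚ) z = 0) {n k : ℕ} (h : n < k) :
    coeff (R := ℚ) n (z ^ k) = 0 := by
  have hd : (X : ℚ⟦X⟧) ^ k ∣ z ^ k := pow_dvd_pow_of_dvd (X_dvd_iff.mpr hz) k
  exact (X_pow_dvd_iff.mp hd) n h

/-- master coefficient formula for polynomial evaluation -/
lemma coeff_eval₂ (hz : constantCoeff (R := ℚ) z = 0) (P : Polynomial ℚ) (n : ℕ) :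
    coeff (R := ℚ) n (Polynomial.eval₂ (C (R := ℚ)) z P) =
      ∑ k ∈ range (n + 1), P.coeff k * coeff (R := ℚ) n (z ^ k) := by
  rw [Polynomial.eval₂_eq_sum_range' (C (R := ℚ)) (Nat.lt_succ_of_le (Nat.le_add_right _ _) :
        P.natDegree < P.natDegree + (n + 1) + 1) z]
  rw [map_sum]
  have : ∀ k ∈ range (P.natDegree + (n+1) + 1),
      coeff (R := ℚ) n (C (R := ℚ) (P.coeff k) * z ^ k) = P.coeff k * coeff (R := ℚ) n (z ^ k) := by
    intro k _; rw [coeff_C_mul]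
  rw [Finset.sum_congr rfl this]
  symm
  apply Finset.sum_subset
  · intro k hk; simp only [mem_range] at *; omega
  · intro k _ hk; simp only [mem_range, not_lt] at hk
    rw [coeff_pow_z_eq_zero hz (by omega), mul_zero]

lemma coeff_psComp_eq (hz : constantCoeff (R := ℚ) z = 0) (F : ℚ⟦X⟧) {n N : ℕ} (h : n < N) :
    coeff (R := ℚ) n (psComp F z) = coeff (R := ℚ) n (Polynomial.eval₂ (C (R := ℚ)) z (trunc N F)) := by
  rw [coeff_eval₂ hz, psComp, coeff_mk]
  apply Finset.sum_congr rfl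
  intro k hk; simp only [mem_range] at hk
  rw [coeff_trunc, if_pos (by omega)]

lemma psComp_mul (hz : constantCoeff (R := ℚ) z = 0) (a b : ℚ⟦X⟧) :
    psComp (a * b) z = psComp a z * psComp b z := by
  ext n
  rw [coeff_psComp_eq hz _ (Nat.lt_succ_self n), coeff_mul]
  have h1 : ∀ p ∈ antidiagonal n, coeff (R := ℚ) p.1 (psComp a z) * coeff (R := ℚ) p.2 (psComp b z) =
      coeff (R := ℚ) p.1 (Polynomial.eval₂ (C (R := ℚ)) z (trunc (n+1) a)) *
      coeff (R := ℚ) p.2 (Polynomial.eval₂ (C (R := ℚ)) z (trunc (n+1) b)) := by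
    intro p hp
    rw [Finset.HasAntidiagonal.mem_antidiagonal] at hp
    rw [coeff_psComp_eq hz a (show p.1 < n+1 by omega),
        coeff_psComp_eq hz b (show p.2 < n+1 by omega)]
  rw [Finset.sum_congr rfl h1, ← coeff_mul, ← Polynomial.eval₂_mul]
  rw [coeff_eval₂ hz, coeff_eval₂ hz]
  apply Finset.sum_congr rfl
  intro k hk; simp only [mem_range] at hk
  congr 1
  rw [coeff_trunc, if_pos (by omega : k < n+1), Polynomial.coeff_mul, coeff_mul]
  apply Finset.sum_congr rfl
  intro p hp
  rw [Finset.HasAntidiagonal.mem_antidiagonal] at hp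
  rw [coeff_trunc, coeff_trunc, if_pos (by omega), if_pos (by omega)]

lemma psComp_add (a b z : ℚ⟦X⟧) : psComp (a + b) z = psComp a z + psComp b z := by
  ext n
  simp [psComp, add_mul, Finset.sum_add_distrib]

lemma psComp_one (z : ℚ⟦X⟧) : psComp 1 z = 1 := by
  ext n
  rw [psComp, coeff_mk]
  rw [Finset.sum_eq_single 0]
  · simp
  · intro k _ hk; simp [coeff_one, hk]
  · simp

lemma psComp_X (hz : constantCoeff (R := ℚ) z = 0) : psComp X z = z := by
  ext n
  rw [psComp, coeff_mk]
  rcases n with _ | m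
  · simp [coeff_X, hz]
  · rw [Finset.sum_eq_single 1]
    · simp
    · intro k _ hk; simp [coeff_X, hk]
    · intro h; simp only [mem_range] at h; omega

lemma psComp_neg (a z : ℚ⟦X⟧) : psComp (-a) z = - psComp a z := by
  ext n; simp [psComp, Finset.sum_neg_distrib]

end CompHom

/-- Coefficients of the algebraic solution `A` of `A - 2A² + A³ = X`, defined recursively. -/
noncomputable def bb : ℕ → ℚ
  | 0 => 0
  | 1 => 1
  | (n+2) =>
      2 * ∑ i ∈ (Finset.Ioo 0 (n+2)).attach, bb i.1 * bb (n+2-i.1)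
      - ∑ i ∈ (Finset.Ioo 0 (n+2)).attach, bb i.1 *
          ∑ j ∈ (Finset.Ioo 0 (n+2-i.1)).attach, bb j.1 * bb (n+2-i.1-j.1)
  decreasing_by
  · have := i.2; simp only [Finset.mem_Ioo] at this; omega
  · have := i.2; simp only [Finset.mem_Ioo] at this; omega
  · have := i.2; simp only [Finset.mem_Ioo] at this; omega
  · have := i.2; have := j.2; simp only [Finset.mem_Ioo] at *; omega
  · have := i.2; have := j.2; simp only [Finset.mem_Ioo] at *; omega

noncomputable def Aser : ℚ⟦X⟧ := PowerSeries.mk bb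

lemma bb_zero : bb 0 = 0 := by rw [bb]
lemma bb_one : bb 1 = 1 := by rw [bb]

lemma bb_succ_succ (n : ℕ) : bb (n+2) =
    2 * ∑ i ∈ Finset.Ioo 0 (n+2), bb i * bb (n+2-i)
      - ∑ i ∈ Finset.Ioo 0 (n+2), bb i * ∑ j ∈ Finset.Ioo 0 (n+2-i), bb j * bb (n+2-i-j) := by
  rw [bb]
  rw [← Finset.sum_attach (Finset.Ioo 0 (n+2)) (fun i => bb i * bb (n+2-i)),
      ← Finset.sum_attach (Finset.Ioo 0 (n+2)) (fun i => bb i * ∑ j ∈ Finset.Ioo 0 (n+2-i), bb j * bb (n+2-i-j))]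
  congr 2
  funext i
  congr 1
  rw [← Finset.sum_attach (Finset.Ioo 0 (n+2-i.1)) (fun j => bb j * bb (n+2-i.1-j))]

lemma coeff_Aser (n : ℕ) : coeff (R := ℚ) n Aser = bb n := coeff_mk n bb

lemma coeff_Aser_sq (m : ℕ) : coeff (R := ℚ) m (Aser * Aser) =
    ∑ i ∈ Finset.Ioo 0 m, bb i * bb (m - i) := by
  rw [coeff_mul, Finset.Nat.sum_antidiagonal_eq_sum_range_succ_mk]
  simp only [coeff_Aser]
  symm
  apply Finset.sum_subset
  · intro i hi; simp only [Finset.mem_Ioo, mem_range] at *; omega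
  · intro i hi1 hi2
    simp only [Finset.mem_Ioo, mem_range, not_and, not_lt] at *
    rcases Nat.eq_zero_or_pos i with h | h
    · rw [h, bb_zero, zero_mul]
    · have : i = m := by omega
      rw [this, Nat.sub_self, bb_zero, mul_zero]

lemma coeff_Aser_cube (m : ℕ) : coeff (R := ℚ) m (Aser * (Aser * Aser)) =
    ∑ i ∈ Finset.Ioo 0 m, bb i * ∑ j ∈ Finset.Ioo 0 (m-i), bb j * bb (m-i-j) := by
  rw [coeff_mul, Finset.Nat.sum_antidiagonal_eq_sum_range_succ_mk]
  simp only [coeff_Aser, coeff_Aser_sq]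
  symm
  apply Finset.sum_subset
  · intro i hi; simp only [Finset.mem_Ioo, mem_range] at *; omega
  · intro i hi1 hi2
    simp only [Finset.mem_Ioo, mem_range, not_and, not_lt] at *
    rcases Nat.eq_zero_or_pos i with h | h
    · rw [h, bb_zero, zero_mul]
    · have : i = m := by omega
      rw [this, Nat.sub_self]
      simp

lemma Aser_cubic : Aser - 2 * Aser^2 + Aser^3 = X := by
  ext n
  simp only [map_add, map_sub, map_mul]
  have h2 : (Aser:ℚ⟦X⟧)^2 = Aser * Aser := by ring
  have h3 : (Aser:ℚ⟦X⟧)^3 = Aser * (Aser * Aser) := by ring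
  have h2c : coeff (R := ℚ) n ((2:ℚ⟦X⟧) * Aser^2) = 2 * coeff (R := ℚ) n (Aser * Aser) := by
    rw [h2, (map_ofNat (C (R := ℚ)) 2).symm, coeff_C_mul]
  rw [h2c, h3, coeff_Aser, coeff_Aser_sq, coeff_Aser_cube, coeff_X]
  rcases n with _ | n
  · simp [bb_zero]
  rcases n with _ | n
  · simp [bb_one, show Finset.Ioo 0 1 = ∅ from rfl]
  · rw [bb_succ_succ]
    simp only [Nat.succ_ne_zero, if_neg (by omega : ¬ n+2 = 1)]
    ring

lemma constantCoeff_Aser : constantCoeff (R := ℚ) Aser = 0 := by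
  rw [← coeff_zero_eq_constantCoeff_apply, coeff_Aser, bb_zero]


local notation "D" => PowerSeries.derivative ℚ

lemma dA2 : D (Aser^2) = 2*Aser*(D Aser) := by
  rw [pow_two, Derivation.leibniz]; simp only [smul_eq_mul]; ring

lemma dA3 : D (Aser^3) = 3*Aser^2*(D Aser) := by
  rw [show Aser^3 = Aser^2*Aser by ring, Derivation.leibniz, dA2]
  simp only [smul_eq_mul]
  ring

lemma hu : D Aser * (3*Aser^2 - 4*Aser + 1) = 1 := by
  have hc : Aser - (Aser^2 + Aser^2) + Aser^3 = X := by linear_combination Aser_cubic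
  have h := congrArg (D ·) hc
  simp only [map_add, map_sub, dA2, dA3, derivative_X] at h
  linear_combination h

lemma du : D (3*Aser^2 - 4*Aser + 1) = (6*Aser - 4) * D Aser := by
  have e : (3*Aser^2 - 4*Aser + 1 : ℚ⟦X⟧)
      = (Aser^2 + Aser^2 + Aser^2) - (Aser + Aser + Aser + Aser) + 1 := by ring
  rw [e]
  simp only [map_add, map_sub, dA2, Derivation.map_one_eq_zero]
  ring

lemma hA'' : D (D Aser) * (3*Aser^2 - 4*Aser + 1) = -(6*Aser - 4) * (D Aser)^2 := by
  have h := congrArg (D ·) hu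
  simp only [Derivation.leibniz, du, Derivation.map_one_eq_zero, smul_eq_mul] at h
  linear_combination h

lemma u_ne_zero : (3*Aser^2 - 4*Aser + 1 : ℚ⟦X⟧) ≠ 0 := by
  intro h
  have := congrArg (constantCoeff (R := ℚ)) h
  simp [map_add, map_sub, map_pow, constantCoeff_Aser] at this

lemma hODE : 4 * D (X * D Aser) + 3 * Aser
    = 27 * (X * D (X * D Aser)) + 2 * D Aser + 2 := by
  set u : ℚ⟦X⟧ := 3*Aser^2 - 4*Aser + 1 with hu_def
  set g : ℚ⟦X⟧ := D (D Aser) with hg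
  set h : ℚ⟦X⟧ := D Aser with hh
  have h3 : g * u^3 = -(6*Aser - 4) := by
    calc g * u^3 = (g * u) * u^2 := by ring
    _ = (-(6*Aser - 4) * h^2) * u^2 := by rw [hA'']
    _ = -(6*Aser-4) * ((h*u)^2) := by ring
    _ = -(6*Aser-4) := by rw [hu]; ring
  have h4 : h * u^3 = u^2 := by
    calc h * u^3 = (h*u) * u^2 := by ring
    _ = u^2 := by rw [hu]; ring
  have hx : (X:ℚ⟦X⟧) = Aser - 2*Aser^2 + Aser^3 := Aser_cubic.symm
  have key : (4*(X*g) + 2*h + 3*Aser - (27*(X*(X*g)) + 27*(X*h) + 2)) * u^3 = 0 := by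
    calc (4*(X*g) + 2*h + 3*Aser - (27*(X*(X*g)) + 27*(X*h) + 2)) * u^3
        = (4*X - 27*X^2)*(g*u^3) + (2 - 27*X)*(h*u^3) + (3*Aser-2)*u^3 := by ring
    _ = (4*X - 27*X^2)*(-(6*Aser-4)) + (2-27*X)*u^2 + (3*Aser-2)*u^3 := by rw [h3, h4]
    _ = 0 := by rw [hx, hu_def]; ring
  have h5 : 4*(X*g) + 2*h + 3*Aser - (27*(X*(X*g)) + 27*(X*h) + 2) = 0 := by
    rcases mul_eq_zero.mp key with h' | h'
    · exact h'
    · exact absurd h' (pow_ne_zero 3 u_ne_zero)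
  have hk : D (X * h) = X*g + h := by
    rw [Derivation.leibniz, derivative_X]; simp only [smul_eq_mul]; ring
  rw [hk]
  linear_combination h5

lemma Aser_rec (m : ℕ) :
    2*((m:ℚ)+2)*(2*(m:ℚ)+3) * bb (m+2) = (27*((m:ℚ)+1)^2 - 3) * bb (m+1) := by
  have hODEC : C (R := ℚ) 4 * D (X * D Aser) + C (R := ℚ) 3 * Aser
      = C (R := ℚ) 27 * (X * D (X * D Aser)) + C (R := ℚ) 2 * D Aser + C (R := ℚ) 2 := by
    simp only [map_ofNat]; exact hODE
  have hc := congrArg (coeff (R := ℚ) (m+1)) hODEC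
  simp only [map_add, coeff_C_mul, coeff_derivative, coeff_succ_X_mul, coeff_C,
    coeff_Aser, Nat.succ_ne_zero, if_neg (Nat.succ_ne_zero m)] at hc
  push_cast at hc ⊢
  linear_combination hc


lemma coeff_W (n : ℕ) : coeff (R := ℚ) n Wseries
    = if n = 0 then 0 else (1/(n:ℚ)) * ((3*n-2).choose (n-1) : ℚ) := coeff_mk _ _

lemma Wseries_rec (m : ℕ) :
    2*((m:ℚ)+2)*(2*(m:ℚ)+3) * coeff (R := ℚ) (m+2) Wseries
      = (27*((m:ℚ)+1)^2 - 3) * coeff (R := ℚ) (m+1) Wseries := by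
  rw [coeff_W, coeff_W, if_neg (by omega : ¬ m+2 = 0), if_neg (by omega : ¬ m+1 = 0)]
  rw [show 3*(m+2)-2 = 3*m+4 by omega, show (m+2)-1 = m+1 by omega,
      show 3*(m+1)-2 = 3*m+1 by omega, show (m+1)-1 = m by omega]
  rw [Nat.cast_choose ℚ (by omega : m+1 ≤ 3*m+4), Nat.cast_choose ℚ (by omega : m ≤ 3*m+1)]
  rw [show 3*m+4 - (m+1) = 2*m+3 by omega, show 3*m+1 - m = 2*m+1 by omega]
  have f1 : (3*m+4)! = (3*m+4)*((3*m+3)*((3*m+2)*(3*m+1)!)) := rfl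
  have f2 : (m+1)! = (m+1)*(m !) := rfl
  have f3 : (2*m+3)! = (2*m+3)*((2*m+2)*((2*m+1)!)) := rfl
  rw [f1, f2, f3]
  push_cast
  have h1 : ((m:ℚ)+1) ≠ 0 := by positivity
  have h2 : ((m:ℚ)+2) ≠ 0 := by positivity
  have h3 : ((m ! : ℕ):ℚ) ≠ 0 := Nat.cast_ne_zero.mpr (Nat.factorial_ne_zero _)
  have h4 : (((3*m+1)! : ℕ):ℚ) ≠ 0 := Nat.cast_ne_zero.mpr (Nat.factorial_ne_zero _)
  have h5 : (((2*m+1)! : ℕ):ℚ) ≠ 0 := Nat.cast_ne_zero.mpr (Nat.factorial_ne_zero _)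
  have h6 : (2*(m:ℚ)+3) ≠ 0 := by positivity
  have h7 : (2*(m:ℚ)+2) ≠ 0 := by positivity
  have h8 : (3*(m:ℚ)+4) ≠ 0 := by positivity
  field_simp
  ring

lemma series_unique (f g : ℚ⟦X⟧)
    (h0 : coeff (R := ℚ) 0 f = coeff (R := ℚ) 0 g) (h1 : coeff (R := ℚ) 1 f = coeff (R := ℚ) 1 g)
    (hf : ∀ m : ℕ, 2*((m:ℚ)+2)*(2*(m:ℚ)+3) * coeff (R := ℚ) (m+2) f
        = (27*((m:ℚ)+1)^2 - 3) * coeff (R := ℚ) (m+1) f)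
    (hg : ∀ m : ℕ, 2*((m:ℚ)+2)*(2*(m:ℚ)+3) * coeff (R := ℚ) (m+2) g
        = (27*((m:ℚ)+1)^2 - 3) * coeff (R := ℚ) (m+1) g) : f = g := by
  ext n
  induction n with
  | zero => exact h0
  | succ n ih =>
    rcases n with _ | m
    · exact h1
    · have hne : (2*((m:ℚ)+2)*(2*(m:ℚ)+3)) ≠ 0 := by positivity
      apply mul_left_cancel₀ hne
      rw [hf m, hg m, ih]

lemma cancel_cubic (a b : ℚ⟦X⟧) (ha : constantCoeff (R := ℚ) a = 0) (hb : constantCoeff (R := ℚ) b = 0)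
    (h : a - 2*a^2 + a^3 = b - 2*b^2 + b^3) : a = b := by
  have key : (a - b) * (1 - 2*(a+b) + (a^2 + a*b + b^2)) = 0 := by linear_combination h
  rcases mul_eq_zero.mp key with h' | h'
  · exact sub_eq_zero.mp h'
  · exfalso
    have hcc := congrArg (constantCoeff (R := ℚ)) h'
    simp [map_add, map_sub, map_mul, map_pow, ha, hb] at hcc

lemma constantCoeff_W : constantCoeff (R := ℚ) Wseries = 0 := by
  rw [← coeff_zero_eq_constantCoeff_apply, coeff_W]; simp

lemma W_eq_Aser : Wseries = Aser := by
  apply series_unique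
  · rw [coeff_W, coeff_Aser, bb_zero]; simp
  · rw [coeff_W, coeff_Aser, bb_one]; norm_num
  · exact Wseries_rec
  · intro m
    rw [coeff_Aser, coeff_Aser]
    exact Aser_rec m

lemma W_cubic : Wseries - 2*Wseries^2 + Wseries^3 = X := by
  rw [W_eq_Aser]; exact Aser_cubic

/-- `W = Σ_{n≥1} (1/n)·binom(3n−2,n−1) t^n` is the compositional inverse of
`Z(X) = X·(1−X)²`: substituting `W` into `Z` gives `W·(1−W)² = t`, and substituting
`Z` into `W` gives back `X`. -/
theorem Wseries_compositional_inverse :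
    Wseries * (1 - Wseries) ^ 2 = PowerSeries.X ∧
    psComp Wseries (PowerSeries.X * (1 - PowerSeries.X) ^ 2) = PowerSeries.X := by
  constructor
  · linear_combination W_cubic
  · set z : ℚ⟦X⟧ := X * (1 - X)^2 with hz_def
    have hz : constantCoeff (R := ℚ) z = 0 := by
      rw [hz_def, map_mul, constantCoeff_X, zero_mul]
    set U : ℚ⟦X⟧ := psComp Wseries z with hU_def
    have hU0 : constantCoeff (R := ℚ) U = 0 := by
      rw [hU_def, ← coeff_zero_eq_constantCoeff_apply, psComp, coeff_mk,
        Finset.sum_range_one]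
      simp [coeff_W]
    have hW2 : psComp (Wseries*Wseries) z = U*U := psComp_mul hz _ _
    have hW3 : psComp (Wseries*(Wseries*Wseries)) z = U*(U*U) := by
      rw [psComp_mul hz, hW2]
    have h2' : psComp (2*(Wseries*Wseries)) z = 2*(U*U) := by
      rw [psComp_mul hz, hW2, show (2:ℚ⟦X⟧) = 1+1 by norm_num, psComp_add, psComp_one]
    have e2 : psComp (Wseries - 2*Wseries^2 + Wseries^3) z = U - 2*U^2 + U^3 := by
      calc psComp (Wseries - 2*Wseries^2 + Wseries^3) z
          = psComp (Wseries + (-(2*(Wseries*Wseries)) + Wseries*(Wseries*Wseries))) z := by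
            ring_nf
        _ = psComp Wseries z + (psComp (-(2*(Wseries*Wseries))) z
              + psComp (Wseries*(Wseries*Wseries)) z) := by rw [psComp_add, psComp_add]
        _ = U + (-(2*(U*U)) + U*(U*U)) := by rw [psComp_neg, h2', hW3]
        _ = U - 2*U^2 + U^3 := by ring
    have e1 : psComp (Wseries - 2*Wseries^2 + Wseries^3) z = z := by
      rw [W_cubic]; exact psComp_X hz
    have hcomp : U - 2*U^2 + U^3 = X - 2*X^2 + X^3 := by
      rw [← e2, e1, hz_def]; ring
    exact cancel_cubic U X hU0 constantCoeff_X hcomp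
end

section
/- For every n ≥ 1, the numbers f_k = (1/(k+1))·binomial(3k+1, k) satisfy the recurrence f_n = Σ_{s=1}^{n} (s+1) · Σ f_{n_0}·f_{n_1}···f_{n_{s−1}}, where the inner sum runs over all ordered s-tuples (n_0, …, n_{s−1}) of nonnegative integers with n_0 + ⋯ + n_{s−1} = n − s. -/
/-- The number of planar Morse profiles with `2k+2` vertices,
`f_k = (1/(k+1))·binom(3k+1, k)` (viewed as a rational number). -/
noncomputable def morseProfileNum (k : ℕ) : ℚ :=
  (1 / (k + 1 : ℚ)) * ((3 * k + 1).choose k : ℚ)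

namespace MorseAux

open Finset PowerSeries

/-- Fuss–Catalan/Raney numbers `A n r = r/(3n+r) * C(3n+r, n)` (as rationals). -/
noncomputable def A (n r : ℕ) : ℚ :=
  if n = 0 then 1 else ((r : ℚ) / (3 * n + r)) * ((3 * n + r).choose n : ℚ)

@[simp] lemma A_zero (r : ℕ) : A 0 r = 1 := by simp [A]

lemma A_zero_right {n : ℕ} (hn : n ≠ 0) : A n 0 = 0 := by simp [A, hn]

lemma A_formula' {n : ℕ} (hn : n ≠ 0) (r : ℕ) :
    A n r = ((r : ℚ) / (3 * n + r)) * ((3 * n + r).choose n : ℚ) := by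
  simp [A, hn]

lemma A_formula (n : ℕ) {r : ℕ} (hr : r ≠ 0) :
    A n r = ((r : ℚ) / (3 * n + r)) * ((3 * n + r).choose n : ℚ) := by
  rcases Nat.eq_zero_or_pos n with h | h
  · subst h
    have : ((r : ℚ)) ≠ 0 := by exact_mod_cast hr
    simp [A, div_self this]
  · exact A_formula' (Nat.pos_iff_ne_zero.mp h) r

lemma A_rec (m r : ℕ) : A (m + 1) (r + 1) = A (m + 1) r + A m (r + 3) := by
  have e1 := Nat.add_one_mul_choose_eq (3 * m + r + 3) m
  have e2 := Nat.add_one_mul_choose_eq (3 * m + r + 3) (m + 1)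
  have e3 := Nat.choose_succ_right_eq (3 * m + r + 4) (m + 1)
  have hs : 3 * m + r + 4 - (m + 1) = 2 * m + r + 3 := by omega
  rw [hs] at e3
  have e23 : (3 * m + r + 4) * Nat.choose (3 * m + r + 3) (m + 1)
      = Nat.choose (3 * m + r + 4) (m + 1) * (2 * m + r + 3) := by
    rw [show 3 * m + r + 3 + 1 = 3 * m + r + 4 from rfl] at e2
    rw [show m + 1 + 1 = m + 2 from rfl] at e2 e3
    omega
  have q1 : ((3 * m + r + 4 : ℕ) : ℚ) * (Nat.choose (3 * m + r + 3) m : ℚ)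
      = (Nat.choose (3 * m + r + 4) (m + 1) : ℚ) * ((m : ℚ) + 1) := by
    exact_mod_cast congrArg (Nat.cast : ℕ → ℚ) e1
  have q2 : ((3 * m + r + 4 : ℕ) : ℚ) * (Nat.choose (3 * m + r + 3) (m + 1) : ℚ)
      = (Nat.choose (3 * m + r + 4) (m + 1) : ℚ) * (2 * (m : ℚ) + (r : ℚ) + 3) := by
    exact_mod_cast congrArg (Nat.cast : ℕ → ℚ) e23
  rw [A_formula' (Nat.succ_ne_zero m) (r + 1), A_formula' (Nat.succ_ne_zero m) r,
    A_formula _ (by omega : r + 3 ≠ 0),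
    show 3 * (m + 1) + (r + 1) = 3 * m + r + 4 from by ring,
    show 3 * (m + 1) + r = 3 * m + r + 3 from by ring,
    show 3 * m + (r + 3) = 3 * m + r + 3 from by ring]
  push_cast at q1 q2 ⊢
  have d1 : (3 : ℚ) * m + r + 4 ≠ 0 := by positivity
  have d2 : (3 : ℚ) * m + r + 3 ≠ 0 := by positivity
  simp only [Nat.succ_eq_add_one]
  rw [show (3:ℚ)*((m:ℚ)+1)+((r:ℚ)+1) = 3*(m:ℚ)+(r:ℚ)+4 from by ring,
    show (3:ℚ)*((m:ℚ)+1)+(r:ℚ) = 3*(m:ℚ)+(r:ℚ)+3 from by ring,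
    show (3:ℚ)*(m:ℚ)+((r:ℚ)+3) = 3*(m:ℚ)+(r:ℚ)+3 from by ring]
  rw [div_mul_eq_mul_div, div_mul_eq_mul_div, div_mul_eq_mul_div, ← add_div,
    div_eq_div_iff d1 d2]
  linear_combination (-(r:ℚ)) * q2 - ((r:ℚ) + 3) * q1

/-- `S n r` is the convolution `∑ A i 1 * A (n-i) r`. -/
noncomputable def S (n r : ℕ) : ℚ := ∑ i ∈ range (n + 1), A i 1 * A (n - i) r

lemma S_eq : ∀ n, ∀ r, S n r = A n (r + 1) := by
  intro n
  induction n using Nat.strong_induction_on with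
  | _ n ih =>
    match n with
    | 0 => intro r; simp [S, A_zero]
    | m + 1 =>
      intro r
      induction r with
      | zero =>
        rw [S, Finset.sum_range_succ, Finset.sum_eq_zero, zero_add,
            Nat.sub_self, A_zero, mul_one]
        intro i hi
        rw [A_zero_right (by simp at hi; omega : m + 1 - i ≠ 0), mul_zero]
      | succ r ihr =>
        have split : S (m + 1) (r + 1) = S (m + 1) r + S m (r + 3) := by
          rw [S, S, S, Finset.sum_range_succ, Finset.sum_range_succ (n := m + 1)]
          have : ∀ i ∈ range (m + 1),
              A i 1 * A (m + 1 - i) (r + 1)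
                = A i 1 * A (m + 1 - i) r + A i 1 * A (m - i) (r + 3) := by
            intro i hi
            simp only [Finset.mem_range] at hi
            have h1 : m + 1 - i = (m - i) + 1 := by omega
            rw [h1, A_rec (m - i) r, mul_add]
          rw [Finset.sum_congr rfl this, Finset.sum_add_distrib]
          simp only [Nat.sub_self, A_zero]
          ring
        rw [split, ihr, ih m (by omega) (r + 3)]
        exact (A_rec m (r + 1)).symm

lemma morse_eq_A2 (n : ℕ) : morseProfileNum n = A n 2 := by
  have u1 := Nat.add_one_mul_choose_eq (3 * n + 1) n
  have u2 := Nat.choose_succ_right_eq (3 * n + 2) n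
  have hs : 3 * n + 2 - n = 2 * n + 2 := by omega
  rw [hs] at u2
  have key : (3 * n + 2) * Nat.choose (3 * n + 1) n
      = Nat.choose (3 * n + 2) n * (2 * n + 2) := by
    rw [show 3 * n + 1 + 1 = 3 * n + 2 from rfl] at u1; omega
  have q : ((3 * (n:ℚ) + 2)) * (Nat.choose (3 * n + 1) n : ℚ)
      = (Nat.choose (3 * n + 2) n : ℚ) * (2 * (n:ℚ) + 2) := by
    exact_mod_cast congrArg (Nat.cast : ℕ → ℚ) key
  rw [morseProfileNum, A_formula n (by norm_num : (2:ℕ) ≠ 0)]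
  push_cast
  have d1 : ((n:ℚ) + 1) ≠ 0 := by positivity
  have d2 : (3 * (n:ℚ) + 2) ≠ 0 := by positivity
  rw [div_mul_eq_mul_div, div_mul_eq_mul_div, one_mul, div_eq_div_iff d1 d2]
  linear_combination q

lemma A_one_succ (n : ℕ) : A (n + 1) 1 = A n 3 := by
  have u1 := Nat.add_one_mul_choose_eq (3 * n + 3) n
  have q : ((3 * (n:ℚ) + 4)) * (Nat.choose (3 * n + 3) n : ℚ)
      = (Nat.choose (3 * n + 4) (n + 1) : ℚ) * ((n:ℚ) + 1) := by
    exact_mod_cast congrArg (Nat.cast : ℕ → ℚ) u1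
  rw [A_formula _ (by norm_num : (1:ℕ) ≠ 0), A_formula _ (by norm_num : (3:ℕ) ≠ 0)]
  push_cast
  rw [show 3 * (n + 1) + 1 = 3 * n + 4 from by ring]
  rw [show (3:ℚ) * ((n:ℚ) + 1) + 1 = 3 * (n:ℚ) + 4 from by ring]
  have d1 : (3 * (n:ℚ) + 4) ≠ 0 := by positivity
  have d2 : (3 * (n:ℚ) + 3) ≠ 0 := by positivity
  rw [div_mul_eq_mul_div, div_mul_eq_mul_div, one_mul, div_eq_div_iff d1 d2]
  linear_combination -3 * q

/-- The Fuss–Catalan generating series `B = ∑ A n 1 xⁿ`. -/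
noncomputable def Am : ℚ⟦X⟧ := PowerSeries.mk (fun n => A n 1)

lemma coeff_Am_sq (n : ℕ) : coeff n (Am ^ 2) = A n 2 := by
  rw [pow_two, coeff_mul, Finset.Nat.sum_antidiagonal_eq_sum_range_succ_mk]
  simp only [Am, coeff_mk]
  exact S_eq n 1

lemma coeff_Am_cube (n : ℕ) : coeff n (Am ^ 3) = A n 3 := by
  rw [show (3:ℕ) = 1 + 2 from rfl, pow_add, pow_one, coeff_mul,
    Finset.Nat.sum_antidiagonal_eq_sum_range_succ_mk]
  simp only [coeff_Am_sq]
  simp only [Am, coeff_mk]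
  simpa [S] using S_eq n 2

lemma Am_eq : Am = 1 + X * Am ^ 3 := by
  ext n
  cases n with
  | zero => simp [Am, coeff_mk, A_zero]
  | succ n =>
    rw [map_add, coeff_succ_X_mul, coeff_Am_cube]
    simp only [Am, coeff_mk, coeff_one, Nat.succ_ne_zero, if_false, zero_add]
    exact A_one_succ n

lemma unit_eq : (1 - X * Am ^ 2) * Am = 1 := by
  have h : (1 - X * Am ^ 2) * Am = Am - X * Am ^ 3 := by ring
  rw [h]
  linear_combination Am_eq

/-- The generating series for `morseProfileNum`. -/
noncomputable def Fm : ℚ⟦X⟧ := PowerSeries.mk morseProfileNum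

lemma Fm_eq : Fm = Am ^ 2 := by
  ext n
  rw [Fm, coeff_mk, coeff_Am_sq, morse_eq_A2]

lemma key : Fm * (1 - X * Fm) ^ 2 = 1 := by
  rw [Fm_eq]
  have h : (Am ^ 2) * (1 - X * Am ^ 2) ^ 2 = ((1 - X * Am ^ 2) * Am) ^ 2 := by ring
  rw [h, unit_eq, one_pow]

/-- Geometric-type series identity. -/
lemma geom (N : ℕ) : ∑ s ∈ range (N + 1), ((s : ℚ⟦X⟧) + 1) * (X * Fm) ^ s
    = Fm - ((N : ℚ⟦X⟧) + 2) * Fm * (X * Fm) ^ (N + 1)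
      + ((N : ℚ⟦X⟧) + 1) * Fm * (X * Fm) ^ (N + 2) := by
  have hk : Fm * (1 - X * Fm) ^ 2 = 1 := key
  induction N with
  | zero =>
    rw [zero_add, Finset.sum_range_one]
    simp only [Nat.cast_zero, pow_zero, mul_one, zero_add]
    linear_combination -hk
  | succ N ih =>
    rw [Finset.sum_range_succ, ih]
    push_cast
    linear_combination (-((N : ℚ⟦X⟧) + 2)) * (X * Fm) ^ (N + 1) * hk

lemma coeff_mk_pow (f : ℕ → ℚ) (s : ℕ) : ∀ m : ℕ,
    coeff m ((PowerSeries.mk f) ^ s)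
      = ∑ v ∈ Finset.Nat.antidiagonalTuple s m, ∏ i, f (v i) := by
  induction s with
  | zero =>
    intro m
    cases m with
    | zero => simp
    | succ m => simp
  | succ s ih =>
    intro m
    rw [pow_succ', coeff_mul]
    simp only [coeff_mk, ih]
    simp_rw [Finset.mul_sum]
    rw [Finset.sum_sigma']
    apply Finset.sum_nbij' (i := fun x => Fin.cons x.1.1 x.2)
      (j := fun w => ⟨(w 0, ∑ i : Fin s, w i.succ), Fin.tail w⟩)
    · rintro ⟨⟨a, b⟩, v⟩ h
      simp only [Finset.mem_sigma, Finset.Nat.mem_antidiagonalTuple,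
        Finset.HasAntidiagonal.mem_antidiagonal] at h ⊢
      rw [Fin.sum_cons, h.2, h.1]
    · intro w h
      simp only [Finset.Nat.mem_antidiagonalTuple, Finset.mem_sigma,
        Finset.HasAntidiagonal.mem_antidiagonal] at h ⊢
      exact ⟨by rw [← h, Fin.sum_univ_succ], rfl⟩
    · rintro ⟨⟨a, b⟩, v⟩ h
      simp only [Fin.cons_zero, Fin.tail_cons]
      congr 1
      simp only [Finset.mem_sigma, Finset.Nat.mem_antidiagonalTuple] at h
      simp [Fin.cons_succ, h.2]
    · intro w h
      simp [Fin.cons_self_tail]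
    · rintro ⟨⟨a, b⟩, v⟩ h
      rw [Fin.prod_univ_succ]
      simp [Fin.cons_zero, Fin.cons_succ]

lemma coeff_cast_mul (s : ℕ) (φ : ℚ⟦X⟧) (n : ℕ) :
    coeff n (((s : ℚ⟦X⟧) + 1) * φ) = ((s : ℚ) + 1) * coeff n φ := by
  rw [show ((s : ℚ⟦X⟧) + 1) = C ((s : ℚ) + 1) from by
    rw [map_add, map_one, map_natCast], coeff_C_mul]

lemma coeff_extract (n : ℕ) (hn : 1 ≤ n) :
    coeff n Fm = ∑ s ∈ range (n + 1), ((s : ℚ) + 1) * coeff n ((X * Fm) ^ s) := by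
  have h := congrArg (coeff n) (geom n)
  rw [map_sum] at h
  simp only [coeff_cast_mul] at h
  have hv : ∀ ψ : ℚ⟦X⟧, coeff n (ψ * (X * Fm) ^ (n + 1)) = 0 := by
    intro ψ
    have : ψ * (X * Fm) ^ (n + 1) = X ^ (n + 1) * (ψ * Fm ^ (n + 1)) := by ring
    rw [this, coeff_X_pow_mul', if_neg (by omega)]
  have hv2 : ∀ ψ : ℚ⟦X⟧, coeff n (ψ * (X * Fm) ^ (n + 2)) = 0 := by
    intro ψ
    have : ψ * (X * Fm) ^ (n + 2) = X ^ (n + 2) * (ψ * Fm ^ (n + 2)) := by ring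
    rw [this, coeff_X_pow_mul', if_neg (by omega)]
  rw [map_add, map_sub, hv ((((n : ℚ⟦X⟧)) + 2) * Fm), hv2 ((((n : ℚ⟦X⟧)) + 1) * Fm)] at h
  rw [sub_zero, add_zero] at h
  exact h.symm

end MorseAux

/-- For `n ≥ 1`, `f_n = Σ_{s=1}^n (s+1) Σ_{n_0+⋯+n_{s−1} = n−s} f_{n_0}···f_{n_{s−1}}`,
the inner sum running over ordered `s`-tuples of nonnegative integers summing to `n − s`. -/
theorem morseProfileNum_recurrence (n : ℕ) (hn : 1 ≤ n) :
    morseProfileNum n = ∑ s ∈ Finset.Icc 1 n, ((s : ℚ) + 1) *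
      ∑ v ∈ Finset.Nat.antidiagonalTuple s (n - s), ∏ i, morseProfileNum (v i) := by
  classical
  open Finset PowerSeries MorseAux in
  have h0 : morseProfileNum n = coeff n Fm := by rw [Fm, coeff_mk]
  rw [h0, coeff_extract n hn]
  have hins : range (n + 1) = insert 0 (Finset.Icc 1 n) := by
    ext x; simp [Finset.mem_range, Finset.mem_Icc]; omega
  rw [hins, Finset.sum_insert (by simp)]
  have h00 : ((0 : ℕ) : ℚ) + 1 = 1 := by norm_num
  have hz : coeff n ((X * Fm : ℚ⟦X⟧) ^ (0 : ℕ)) = 0 := by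
    rw [pow_zero, coeff_one, if_neg (by omega)]
  rw [hz, mul_zero, zero_add]
  apply Finset.sum_congr rfl
  intro s hs
  simp only [Finset.mem_Icc] at hs
  congr 1
  rw [mul_pow, coeff_X_pow_mul', if_pos hs.2, Fm, coeff_mk_pow]
end

section
/- For every k ≥ 0, the number of sequences of partitions ∅ = λ_0, λ_1, …, λ_{2k} = ∅ in which each λ_{i+1} is obtained from λ_i by either adding one cell to the Young diagram or removing one cell from it equals (2k)!/(2^k·k!) = 1·3·5···(2k−1). -/
/-- Adding one cell to the Young diagram of a partition, given as the multiset of its parts: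
either append a new part equal to `1`, or increase one part by `1`. -/
def AddCell (s t : Multiset ℕ) : Prop :=
  t = 1 ::ₘ s ∨ ∃ h ∈ s, t = (h + 1) ::ₘ s.erase h

/-- A simple move between partitions (multisets of positive parts): add one cell to the
Young diagram, or remove one cell from it (the inverse operation). -/
def SimpleMove (s t : Multiset ℕ) : Prop :=
  0 ∉ s ∧ 0 ∉ t ∧ (AddCell s t ∨ AddCell t s)

namespace Osc

def up (a : ℕ) (s : Multiset ℕ) : Multiset ℕ :=
  if a = 1 then 1 ::ₘ s else a ::ₘ s.erase (a - 1)

def dn (b : ℕ) (s : Multiset ℕ) : Multiset ℕ :=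
  if b = 1 then s.erase 1 else (b - 1) ::ₘ s.erase b

lemma count_erase (s : Multiset ℕ) (x y : ℕ) :
    (s.erase x).count y = s.count y - if y = x then 1 else 0 := by
  rcases eq_or_ne y x with rfl | h
  · simp [Multiset.count_erase_self]
  · simp [Multiset.count_erase_of_ne h, h]

lemma count_up (a : ℕ) (s : Multiset ℕ) (y : ℕ) :
    (up a s).count y =
      (if y = a then 1 else 0) + (s.count y - if y = a - 1 ∧ a ≠ 1 then 1 else 0) := by
  rcases eq_or_ne a 1 with rfl | h
  · rw [up, if_pos rfl, Multiset.count_cons]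
    split_ifs <;> omega
  · rw [up, if_neg h, Multiset.count_cons, count_erase]
    split_ifs <;> omega

lemma count_dn (b : ℕ) (s : Multiset ℕ) (y : ℕ) :
    (dn b s).count y =
      (if y = b - 1 ∧ b ≠ 1 then 1 else 0) + (s.count y - if y = b then 1 else 0) := by
  rcases eq_or_ne b 1 with rfl | h
  · rw [dn, if_pos rfl, count_erase]
    split_ifs <;> omega
  · rw [dn, if_neg h, Multiset.count_cons, count_erase]
    split_ifs <;> omega

lemma sum_up (a : ℕ) (s : Multiset ℕ) (ha : a ≠ 0) (h1 : a ≠ 1 → a - 1 ∈ s) :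
    (up a s).sum = s.sum + 1 := by
  rcases eq_or_ne a 1 with rfl | h
  · rw [up, if_pos rfl, Multiset.sum_cons]; omega
  · have hm := h1 h
    have key : (a-1) + (s.erase (a-1)).sum = s.sum := by
      rw [← Multiset.sum_cons, Multiset.cons_erase hm]
    rw [up, if_neg h, Multiset.sum_cons]
    omega

lemma sum_dn (b : ℕ) (s : Multiset ℕ) (hb : b ∈ s) (hb0 : b ≠ 0) :
    (dn b s).sum + 1 = s.sum := by
  have key : b + (s.erase b).sum = s.sum := by
    rw [← Multiset.sum_cons, Multiset.cons_erase hb]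
  rcases eq_or_ne b 1 with rfl | h
  · rw [dn, if_pos rfl]; omega
  · rw [dn, if_neg h, Multiset.sum_cons]; omega

lemma notmem_iff_count (s : Multiset ℕ) (y : ℕ) : y ∉ s ↔ s.count y = 0 := by
  simp [Multiset.count_eq_zero]

lemma up_pos {s : Multiset ℕ} (h : 0 ∉ s) (a : ℕ) (ha : a ≠ 0) : 0 ∉ up a s := by
  rw [notmem_iff_count] at h ⊢
  rw [count_up]
  split_ifs <;> omega

lemma dn_pos {s : Multiset ℕ} (h : 0 ∉ s) (b : ℕ) (hb : b ≠ 0) : 0 ∉ dn b s := by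
  rw [notmem_iff_count] at h ⊢
  rw [count_dn]
  split_ifs <;> omega

open Finset

def upInd (s : Multiset ℕ) : Finset ℕ := insert 1 (s.toFinset.image (· + 1))

def covFin (s : Multiset ℕ) : Finset (Multiset ℕ) := (upInd s).image (up · s)

def dnFin (s : Multiset ℕ) : Finset (Multiset ℕ) :=
  (s.toFinset.filter (· ≠ 0)).image (dn · s)

lemma mem_upInd {a : ℕ} {s : Multiset ℕ} :
    a ∈ upInd s ↔ a = 1 ∨ ∃ h ∈ s, a = h + 1 := by
  simp [upInd, eq_comm]

lemma upInd_ne_zero {a : ℕ} {s : Multiset ℕ} (h : a ∈ upInd s) : a ≠ 0 := by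
  rw [mem_upInd] at h; rcases h with rfl | ⟨x, _, rfl⟩ <;> omega

lemma upInd_sub_mem {a : ℕ} {s : Multiset ℕ} (h : a ∈ upInd s) (h1 : a ≠ 1) :
    a - 1 ∈ s := by
  rw [mem_upInd] at h
  rcases h with rfl | ⟨x, hx, rfl⟩
  · omega
  · simpa using hx

lemma mem_covFin_iff {s t : Multiset ℕ} (h0 : 0 ∉ s) :
    t ∈ covFin s ↔ AddCell s t := by
  constructor
  · intro ht
    rcases Finset.mem_image.1 ht with ⟨a, ha, rfl⟩
    rcases mem_upInd.1 ha with rfl | ⟨x, hx, rfl⟩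
    · exact Or.inl (by rw [up, if_pos rfl])
    · refine Or.inr ⟨x, hx, ?_⟩
      have hx0 : x ≠ 0 := fun h => h0 (h ▸ hx)
      rw [up, if_neg (by omega)]
      simp
  · rintro (rfl | ⟨x, hx, rfl⟩)
    · exact Finset.mem_image.2 ⟨1, by simp [mem_upInd], by rw [up, if_pos rfl]⟩
    · refine Finset.mem_image.2 ⟨x + 1, mem_upInd.2 (Or.inr ⟨x, hx, rfl⟩), ?_⟩
      have hx0 : x ≠ 0 := fun h => h0 (h ▸ hx)
      rw [up, if_neg (by omega)]
      simp

lemma covFin_pos {s t : Multiset ℕ} (h0 : 0 ∉ s) (ht : t ∈ covFin s) : 0 ∉ t := by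
  rcases Finset.mem_image.1 ht with ⟨a, ha, rfl⟩
  exact up_pos h0 a (upInd_ne_zero ha)

lemma covFin_sum {s t : Multiset ℕ} (ht : t ∈ covFin s) : t.sum = s.sum + 1 := by
  rcases Finset.mem_image.1 ht with ⟨a, ha, rfl⟩
  exact sum_up a s (upInd_ne_zero ha) (upInd_sub_mem ha)

lemma dnFin_pos {s t : Multiset ℕ} (h0 : 0 ∉ s) (ht : t ∈ dnFin s) : 0 ∉ t := by
  rcases Finset.mem_image.1 ht with ⟨b, hb, rfl⟩
  simp only [Finset.mem_filter, Multiset.mem_toFinset] at hb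
  exact dn_pos h0 b hb.2

lemma dnFin_sum {s t : Multiset ℕ} (ht : t ∈ dnFin s) : t.sum + 1 = s.sum := by
  rcases Finset.mem_image.1 ht with ⟨b, hb, rfl⟩
  simp only [Finset.mem_filter, Multiset.mem_toFinset] at hb
  exact sum_dn b s hb.1 hb.2

/-- duality : `t` covers `s` iff `s` is obtained from `t` by removing a cell -/
lemma dual {s t : Multiset ℕ} (hs : 0 ∉ s) (ht : 0 ∉ t) :
    t ∈ covFin s ↔ s ∈ dnFin t := by
  rw [notmem_iff_count] at hs ht
  constructor
  · intro h
    rcases Finset.mem_image.1 h with ⟨a, ha, rfl⟩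
    have ha0 : a ≠ 0 := upInd_ne_zero ha
    have ham : a ≠ 1 → s.count (a - 1) ≥ 1 :=
      fun h1 => Multiset.one_le_count_iff_mem.2 (upInd_sub_mem ha h1)
    refine Finset.mem_image.2 ⟨a, ?_, ?_⟩
    · simp only [Finset.mem_filter, Multiset.mem_toFinset]
      refine ⟨Multiset.one_le_count_iff_mem.1 ?_, ha0⟩
      rw [count_up]
      split_ifs <;> omega
    · apply Multiset.ext.2
      intro y
      rw [count_dn, count_up]
      rcases eq_or_ne a 1 with rfl | h1
      · split_ifs <;> omega
      · have h2 := ham h1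
        rcases eq_or_ne y (a - 1) with rfl | hy <;> split_ifs <;> omega
  · intro h
    rcases Finset.mem_image.1 h with ⟨b, hb, rfl⟩
    simp only [Finset.mem_filter, Multiset.mem_toFinset] at hb
    have hbc : t.count b ≥ 1 := Multiset.one_le_count_iff_mem.2 hb.1
    have hb0 : b ≠ 0 := hb.2
    refine Finset.mem_image.2 ⟨b, ?_, ?_⟩
    · rw [mem_upInd]
      rcases eq_or_ne b 1 with rfl | h1
      · exact Or.inl rfl
      · refine Or.inr ⟨b - 1, ?_, by omega⟩
        apply Multiset.one_le_count_iff_mem.1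
        rw [count_dn]
        split_ifs <;> omega
    · apply Multiset.ext.2
      intro y
      rw [count_up, count_dn]
      rcases eq_or_ne y b with rfl | hy <;> split_ifs <;> omega

lemma up_injOn (s : Multiset ℕ) : Set.InjOn (up · s) (upInd s) := by
  intro a ha b hb hab
  by_contra hne
  have ha0 : a ≠ 0 := upInd_ne_zero ha
  have hb0 : b ≠ 0 := upInd_ne_zero hb
  have := Multiset.ext.1 hab a
  rw [count_up, count_up] at this
  have hsb : b ≠ 1 → 1 ≤ s.count (b - 1) :=
    fun h1 => Multiset.one_le_count_iff_mem.2 (upInd_sub_mem hb h1)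
  rcases eq_or_ne a (b - 1) with rfl | hy <;> split_ifs at this <;> omega

lemma dn_injOn (s : Multiset ℕ) :
    Set.InjOn (dn · s) (s.toFinset.filter (· ≠ 0)) := by
  intro a ha b hb hab
  by_contra hne
  simp only [Finset.coe_filter, Set.mem_setOf_eq, Multiset.mem_toFinset] at ha hb
  have ha1 : 1 ≤ s.count a := Multiset.one_le_count_iff_mem.2 ha.1
  have hb1 : 1 ≤ s.count b := Multiset.one_le_count_iff_mem.2 hb.1
  have := Multiset.ext.1 hab a
  rw [count_dn, count_dn] at this
  rcases eq_or_ne a (b - 1) with h' | hy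
  · subst h'
    split_ifs at this <;> omega
  · split_ifs at this <;> omega

lemma card_covFin {s : Multiset ℕ} (h0 : 0 ∉ s) :
    (covFin s).card = s.toFinset.card + 1 := by
  rw [covFin, Finset.card_image_of_injOn (up_injOn s), upInd,
    Finset.card_insert_of_notMem, Finset.card_image_of_injective _ (add_left_injective 1)]
  intro h
  rcases Finset.mem_image.1 h with ⟨x, hx, hx1⟩
  have : x = 0 := by omega
  exact h0 (by simpa [this] using (Multiset.mem_toFinset.1 hx))

lemma card_dnFin {s : Multiset ℕ} (h0 : 0 ∉ s) :
    (dnFin s).card = s.toFinset.card := by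
  rw [dnFin, Finset.card_image_of_injOn (dn_injOn s), Finset.filter_true_of_mem]
  intro x hx
  exact fun h => h0 (by simpa [h] using (Multiset.mem_toFinset.1 hx))

lemma count_up_eq {a : ℕ} {s : Multiset ℕ} (ha : a ∈ upInd s) (y : ℕ) :
    (up a s).count y + (if y = a - 1 ∧ a ≠ 1 then 1 else 0)
      = s.count y + (if y = a then 1 else 0) := by
  rw [count_up]
  have h0 : a ≠ 0 := upInd_ne_zero ha
  rcases eq_or_ne y (a - 1) with rfl | hy
  · rcases eq_or_ne a 1 with rfl | h1
    · split_ifs <;> omega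
    · have := Multiset.one_le_count_iff_mem.2 (upInd_sub_mem ha h1)
      split_ifs <;> omega
  · split_ifs <;> omega

lemma count_dn_eq {b : ℕ} {s : Multiset ℕ} (hb : b ∈ s) (y : ℕ) :
    (dn b s).count y + (if y = b then 1 else 0)
      = s.count y + (if y = b - 1 ∧ b ≠ 1 then 1 else 0) := by
  rw [count_dn]
  rcases eq_or_ne y b with rfl | hy
  · have := Multiset.one_le_count_iff_mem.2 hb
    split_ifs <;> omega
  · split_ifs <;> omega

lemma up_cancel {a : ℕ} {s t : Multiset ℕ} (ha : a ∈ upInd s) (hb : a ∈ upInd t)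
    (h : up a s = up a t) : s = t := by
  apply Multiset.ext.2
  intro y
  have e1 := count_up_eq ha y
  have e2 := count_up_eq hb y
  rw [h] at e1
  omega

lemma dn_cancel {b : ℕ} {s t : Multiset ℕ} (hb : b ∈ s) (hb' : b ∈ t)
    (h : dn b s = dn b t) : s = t := by
  apply Multiset.ext.2
  intro y
  have e1 := count_dn_eq hb y
  have e2 := count_dn_eq hb' y
  rw [h] at e1
  omega

lemma card_inter_cov {s t : Multiset ℕ} (hs : 0 ∉ s) (ht : 0 ∉ t) (hne : s ≠ t) :
    (covFin s ∩ covFin t).card = (dnFin s ∩ dnFin t).card := by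
  apply Finset.card_bij' (fun m _ => s + t - m) (fun r _ => s + t - r)
  · -- maps into dnFin s ∩ dnFin t
    intro m hm
    rcases Finset.mem_inter.1 hm with ⟨hm1, hm2⟩
    rcases Finset.mem_image.1 hm1 with ⟨a, ha, rfl⟩
    rcases Finset.mem_image.1 hm2 with ⟨b, hb, hab⟩
    have hne' : a ≠ b := by
      rintro rfl
      exact hne (up_cancel ha hb hab.symm)
    have ha0 : a ≠ 0 := upInd_ne_zero ha
    have hb0 : b ≠ 0 := upInd_ne_zero hb
    have e1 := count_up_eq ha
    have e2 := count_up_eq hb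
    rw [hab] at e2
    have hbs : b ∈ s := by
      have f1 := e1 b; have f2 := e2 b
      apply Multiset.one_le_count_iff_mem.1
      split_ifs at f1 f2 <;> omega
    have hat : a ∈ t := by
      have f1 := e1 a; have f2 := e2 a
      apply Multiset.one_le_count_iff_mem.1
      split_ifs at f1 f2 <;> omega
    have key1 : s + t - up a s = dn b s := by
      apply Multiset.ext.2
      intro y
      rw [Multiset.count_sub, Multiset.count_add, count_dn]
      have f1 := e1 y; have f2 := e2 y
      split_ifs at f1 f2 ⊢ <;> omega
    have key2 : s + t - up a s = dn a t := by
      apply Multiset.ext.2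
      intro y
      rw [Multiset.count_sub, Multiset.count_add, count_dn]
      have f1 := e1 y; have f2 := e2 y
      split_ifs at f1 f2 ⊢ <;> omega
    refine Finset.mem_inter.2 ⟨?_, ?_⟩
    · rw [key1]
      exact Finset.mem_image.2 ⟨b, by simp [Multiset.mem_toFinset, hbs, hb0], rfl⟩
    · rw [key2]
      exact Finset.mem_image.2 ⟨a, by simp [Multiset.mem_toFinset, hat, ha0], rfl⟩
  · -- reverse map into covFin s ∩ covFin t
    intro r hr
    rcases Finset.mem_inter.1 hr with ⟨hr1, hr2⟩
    rcases Finset.mem_image.1 hr1 with ⟨b, hbm, rfl⟩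
    rcases Finset.mem_image.1 hr2 with ⟨a, ham, hba⟩
    simp only [Finset.mem_filter, Multiset.mem_toFinset] at hbm ham
    obtain ⟨hbs, hb0⟩ := hbm
    obtain ⟨hat, ha0⟩ := ham
    have hne' : a ≠ b := by
      rintro rfl
      exact hne (dn_cancel hbs hat hba.symm)
    have e1 := count_dn_eq hbs
    have e2 := count_dn_eq hat
    rw [hba] at e2
    have haInd : a ∈ upInd s := by
      rw [mem_upInd]
      rcases eq_or_ne a 1 with rfl | h1
      · exact Or.inl rfl
      · refine Or.inr ⟨a - 1, ?_, by omega⟩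
        have f1 := e1 (a-1); have f2 := e2 (a-1)
        apply Multiset.one_le_count_iff_mem.1
        split_ifs at f1 f2 <;> omega
    have hbInd : b ∈ upInd t := by
      rw [mem_upInd]
      rcases eq_or_ne b 1 with rfl | h1
      · exact Or.inl rfl
      · refine Or.inr ⟨b - 1, ?_, by omega⟩
        have f1 := e1 (b-1); have f2 := e2 (b-1)
        apply Multiset.one_le_count_iff_mem.1
        split_ifs at f1 f2 <;> omega
    have e3 := count_up_eq haInd
    have e4 := count_up_eq hbInd
    have key1 : s + t - dn b s = up a s := by
      apply Multiset.ext.2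
      intro y
      rw [Multiset.count_sub, Multiset.count_add]
      have f1 := e1 y; have f2 := e2 y; have f3 := e3 y
      split_ifs at f1 f2 f3 <;> omega
    have key2 : s + t - dn b s = up b t := by
      apply Multiset.ext.2
      intro y
      rw [Multiset.count_sub, Multiset.count_add]
      have f1 := e1 y; have f2 := e2 y; have f4 := e4 y
      split_ifs at f1 f2 f4 <;> omega
    refine Finset.mem_inter.2 ⟨?_, ?_⟩
    · rw [key1]; exact Finset.mem_image.2 ⟨a, haInd, rfl⟩
    · rw [key2]; exact Finset.mem_image.2 ⟨b, hbInd, rfl⟩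
  · -- left inverse
    intro m hm
    rcases Finset.mem_inter.1 hm with ⟨hm1, hm2⟩
    rcases Finset.mem_image.1 hm1 with ⟨a, ha, rfl⟩
    rcases Finset.mem_image.1 hm2 with ⟨b, hb, hab⟩
    have hne' : a ≠ b := by
      rintro rfl
      exact hne (up_cancel ha hb hab.symm)
    have e1 := count_up_eq ha
    have e2 := count_up_eq hb
    rw [hab] at e2
    apply tsub_tsub_cancel_of_le
    rw [Multiset.le_iff_count]
    intro y
    rw [Multiset.count_add]
    have f1 := e1 y; have f2 := e2 y
    split_ifs at f1 f2 <;> omega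
  · -- right inverse
    intro r hr
    rcases Finset.mem_inter.1 hr with ⟨hr1, hr2⟩
    rcases Finset.mem_image.1 hr1 with ⟨b, hbm, rfl⟩
    rcases Finset.mem_image.1 hr2 with ⟨a, ham, hba⟩
    simp only [Finset.mem_filter, Multiset.mem_toFinset] at hbm ham
    obtain ⟨hbs, hb0⟩ := hbm
    obtain ⟨hat, ha0⟩ := ham
    have hne' : a ≠ b := by
      rintro rfl
      exact hne (dn_cancel hbs hat hba.symm)
    have e1 := count_dn_eq hbs
    have e2 := count_dn_eq hat
    rw [hba] at e2
    apply tsub_tsub_cancel_of_le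
    rw [Multiset.le_iff_count]
    intro y
    rw [Multiset.count_add]
    have f1 := e1 y; have f2 := e2 y
    split_ifs at f1 f2 <;> omega

def Pn (n : ℕ) : Finset (Multiset ℕ) :=
  Finset.univ.image (fun p : Nat.Partition n => p.parts)

lemma mem_Pn {n : ℕ} {s : Multiset ℕ} : s ∈ Pn n ↔ s.sum = n ∧ 0 ∉ s := by
  constructor
  · intro h
    rcases Finset.mem_image.1 h with ⟨p, _, rfl⟩
    exact ⟨p.parts_sum, fun h0 => by simpa using p.parts_pos h0⟩
  · rintro ⟨rfl, h0⟩
    exact Finset.mem_image.2 ⟨⟨s, fun hi => Nat.pos_of_ne_zero (fun h' => h0 (h' ▸ hi)), rfl⟩,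
      Finset.mem_univ _, rfl⟩

lemma sum_eq_zero_iff {s : Multiset ℕ} (h : 0 ∉ s) : s.sum = 0 ↔ s = 0 := by
  constructor
  · intro hs
    by_contra hne
    obtain ⟨x, hx⟩ := Multiset.exists_mem_of_ne_zero hne
    have hx0 : x ≠ 0 := fun h' => h (h' ▸ hx)
    have := Multiset.le_sum_of_mem hx  -- x ≤ s.sum  (ℕ canonically ordered)
    omega
  · rintro rfl; rfl

def f (s : Multiset ℕ) : ℕ :=
  if s = 0 then 1 else ∑ r ∈ (dnFin s).attach, f r.1
termination_by s.sum
decreasing_by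
  have := dnFin_sum r.2
  omega

lemma f_zero : f 0 = 1 := by rw [f]; simp

lemma f_ne {s : Multiset ℕ} (h : s ≠ 0) : f s = ∑ r ∈ dnFin s, f r := by
  rw [f, if_neg h, Finset.sum_attach]

lemma covFin_subset_Pn {s : Multiset ℕ} (hs : 0 ∉ s) {n : ℕ} (hsum : s.sum + 1 = n) :
    covFin s ⊆ Pn n := by
  intro m hm
  exact mem_Pn.2 ⟨by rw [covFin_sum hm]; omega, covFin_pos hs hm⟩

lemma dnFin_subset_Pn {s : Multiset ℕ} (hs : 0 ∉ s) {n : ℕ} (hsum : s.sum = n + 1) :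
    dnFin s ⊆ Pn n := by
  intro r hr
  refine mem_Pn.2 ⟨?_, dnFin_pos hs hr⟩
  have := dnFin_sum hr
  omega

lemma keyB : ∀ n : ℕ, ∀ s : Multiset ℕ, 0 ∉ s → s.sum = n →
    ∑ m ∈ covFin s, f m = (n + 1) * f s := by
  intro n
  induction n using Nat.strong_induction_on with
  | _ n ih =>
  intro s hs hsum
  rcases eq_or_ne s 0 with rfl | hs0
  · -- s = 0, n = 0
    have hn : n = 0 := by simpa using hsum.symm
    subst hn
    have hcov : covFin (0 : Multiset ℕ) = {1 ::ₘ 0} := by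
      rw [covFin, upInd]
      simp [up]
    rw [hcov, Finset.sum_singleton, f_ne (by simp : (1 ::ₘ 0 : Multiset ℕ) ≠ 0)]
    have hdn : dnFin (1 ::ₘ (0 : Multiset ℕ)) = {(0 : Multiset ℕ)} := by
      rw [dnFin]
      have h1 : (1 ::ₘ (0 : Multiset ℕ)).toFinset = {1} := by simp
      rw [h1, Finset.filter_singleton, if_pos (by norm_num), Finset.image_singleton]
      simp [dn]
    rw [hdn, Finset.sum_singleton, f_zero]
  · have hn1 : 1 ≤ n := by
      rcases Nat.eq_zero_or_pos n with h0 | h; · exact absurd ((sum_eq_zero_iff hs).1 (hsum.trans h0)) hs0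
      · exact h
    have step1 : ∑ m ∈ covFin s, f m = ∑ m ∈ covFin s, ∑ r ∈ Pn n, if r ∈ dnFin m then f r else 0 := by
      refine Finset.sum_congr rfl fun m hm => ?_
      have hmpos := covFin_pos hs hm
      have hmsum := covFin_sum hm
      have hm0 : m ≠ 0 := by
        intro h; rw [h] at hmsum; simp at hmsum
      rw [f_ne hm0, ← Finset.sum_filter]
      congr 1
      ext r
      simp only [Finset.mem_filter]
      exact ⟨fun h => ⟨dnFin_subset_Pn hmpos (by omega) h, h⟩, fun h => h.2⟩
    rw [step1, Finset.sum_comm]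
    have step2 : ∀ r ∈ Pn n, (∑ m ∈ covFin s, if r ∈ dnFin m then f r else 0)
        = (covFin s ∩ covFin r).card * f r := by
      intro r hr
      obtain ⟨hrsum, hrpos⟩ := mem_Pn.1 hr
      have hcong : ∀ m ∈ covFin s, (if r ∈ dnFin m then f r else 0)
          = (if m ∈ covFin r then f r else 0) := by
        intro m hm
        have : r ∈ dnFin m ↔ m ∈ covFin r := (dual hrpos (covFin_pos hs hm)).symm
        rw [if_congr this rfl rfl]
      rw [Finset.sum_congr rfl hcong, ← Finset.sum_filter, Finset.filter_mem_eq_inter,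
        Finset.sum_const, smul_eq_mul]
    rw [Finset.sum_congr rfl step2]
    have step3 : ∀ r ∈ Pn n, (covFin s ∩ covFin r).card * f r
        = ((dnFin s ∩ dnFin r).card + if r = s then 1 else 0) * f r := by
      intro r hr
      obtain ⟨hrsum, hrpos⟩ := mem_Pn.1 hr
      rcases eq_or_ne r s with rfl | hne
      · rw [Finset.inter_self, Finset.inter_self, if_pos rfl, card_covFin hrpos,
          card_dnFin hrpos]
      · rw [card_inter_cov hs hrpos (fun h => hne h.symm), if_neg hne, add_zero]
    rw [Finset.sum_congr rfl step3]
    have hsPn : s ∈ Pn n := mem_Pn.2 ⟨hsum, hs⟩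
    have step4 : ∑ r ∈ Pn n, ((dnFin s ∩ dnFin r).card + if r = s then 1 else 0) * f r
        = (∑ r ∈ Pn n, (dnFin s ∩ dnFin r).card * f r) + f s := by
      rw [show (fun r => ((dnFin s ∩ dnFin r).card + if r = s then 1 else 0) * f r)
          = fun r => (dnFin s ∩ dnFin r).card * f r + (if r = s then f r else 0) from ?_]
      · rw [Finset.sum_add_distrib, Finset.sum_ite_eq' (Pn n) s f, if_pos hsPn]
      · funext r
        rw [add_mul, ite_mul, one_mul, zero_mul]
    rw [step4]
    have step5 : ∀ r ∈ Pn n, (dnFin s ∩ dnFin r).card * f r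
        = ∑ q ∈ dnFin s, if q ∈ dnFin r then f r else 0 := by
      intro r hr
      rw [← Finset.sum_filter, Finset.filter_mem_eq_inter, Finset.sum_const, smul_eq_mul]
    rw [Finset.sum_congr rfl step5, Finset.sum_comm]
    have step6 : ∀ q ∈ dnFin s, (∑ r ∈ Pn n, if q ∈ dnFin r then f r else 0)
        = n * f q := by
      intro q hq
      have hqpos := dnFin_pos hs hq
      have hqsum := dnFin_sum hq
      have hcong : ∀ r ∈ Pn n, (if q ∈ dnFin r then f r else 0)
          = (if r ∈ covFin q then f r else 0) := by
        intro r hr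
        obtain ⟨hrsum, hrpos⟩ := mem_Pn.1 hr
        rw [if_congr (dual hqpos hrpos) rfl rfl]
      rw [Finset.sum_congr rfl hcong, ← Finset.sum_filter]
      have : (Pn n).filter (· ∈ covFin q) = covFin q := by
        ext r
        simp only [Finset.mem_filter]
        exact ⟨fun h => h.2, fun h => ⟨covFin_subset_Pn hqpos (by omega) h, h⟩⟩
      rw [this, ih q.sum (by omega) q hqpos rfl]
      congr 1
      omega
    rw [Finset.sum_congr rfl step6, ← Finset.mul_sum, ← f_ne hs0]
    ring

/-! ### the double factorial and arithmetic identities -/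

def dd : ℕ → ℕ
  | 0 => 1
  | 1 => 0
  | (n+2) => (n+1) * dd n

lemma AR0 (n : ℕ) : dd (n+1) = n * dd (n-1) := by
  cases n with
  | zero => rfl
  | succ m => rfl

lemma ARpos (n u : ℕ) : Nat.choose (n+1) (u+1) * dd (n-u)
    = Nat.choose n (u+2) * dd (n-(u+2)) * (u+2) + Nat.choose n u * dd (n-u) := by
  rcases Nat.lt_or_ge n (u+1) with h | h
  · -- n ≤ u
    rcases Nat.lt_or_ge n u with h2 | h2
    · rw [Nat.choose_eq_zero_of_lt (by omega), Nat.choose_eq_zero_of_lt (by omega),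
        Nat.choose_eq_zero_of_lt (by omega)]
      ring
    · have : n = u := by omega
      subst this
      rw [Nat.choose_self, Nat.choose_eq_zero_of_lt (show n < n + 2 by omega),
        Nat.choose_self, Nat.sub_self]
      norm_num [dd]
  · rcases Nat.lt_or_ge n (u+2) with h1 | h1
    · have : n = u + 1 := by omega
      subst this
      rw [show u + 1 - u = 1 from by omega,
        Nat.choose_eq_zero_of_lt (show u + 1 < u + 2 by omega)]
      simp [dd]
    · obtain ⟨m, rfl⟩ : ∃ m, n = u + 2 + m := ⟨n - u - 2, by omega⟩
      rw [show u + 2 + m - u = m + 2 from by omega,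
        show u + 2 + m - (u + 2) = m from by omega]
      have hdd : dd (m+2) = (m+1) * dd m := rfl
      have hp : Nat.choose (u+2+m+1) (u+1) = Nat.choose (u+2+m) u + Nat.choose (u+2+m) (u+1) := by
        exact Nat.choose_succ_succ (u+2+m) u
      have hq : Nat.choose (u+2+m) (u+2) * (u+2) = Nat.choose (u+2+m) (u+1) * (m+1) := by
        have := Nat.choose_succ_right_eq (u+2+m) (u+1)
        rw [this, show u + 2 + m - (u+1) = m + 1 from by omega]
      calc Nat.choose (u+2+m+1) (u+1) * dd (m+2)
          = (Nat.choose (u+2+m) u + Nat.choose (u+2+m) (u+1)) * ((m+1) * dd m) := by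
            rw [hp, hdd]
        _ = Nat.choose (u+2+m) (u+1) * (m+1) * dd m + Nat.choose (u+2+m) u * ((m+1) * dd m) := by
            ring
        _ = Nat.choose (u+2+m) (u+2) * dd m * (u+2) + Nat.choose (u+2+m) u * dd (m+2) := by
            rw [← hq, hdd]; ring

/-! ### walk counts -/

def nbr (s : Multiset ℕ) : Finset (Multiset ℕ) :=
  if 0 ∈ s then ∅ else covFin s ∪ dnFin s

lemma mem_nbr {m s : Multiset ℕ} : m ∈ nbr s ↔ SimpleMove m s := by
  unfold SimpleMove
  by_cases h : 0 ∈ s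
  · rw [nbr, if_pos h]
    simp only [Finset.notMem_empty, false_iff]
    rintro ⟨_, h2, _⟩
    exact h2 h
  · rw [nbr, if_neg h, Finset.mem_union]
    constructor
    · rintro (hm | hm)
      · exact ⟨covFin_pos h hm, h, Or.inr ((mem_covFin_iff h).1 hm)⟩
      · have hm0 : 0 ∉ m := dnFin_pos h hm
        exact ⟨hm0, h, Or.inl ((mem_covFin_iff hm0).1 ((dual hm0 h).2 hm))⟩
    · rintro ⟨hm0, hs0, hadd | hadd⟩
      · exact Or.inr ((dual hm0 hs0).1 ((mem_covFin_iff hm0).2 hadd))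
      · exact Or.inl ((mem_covFin_iff hs0).2 hadd)

def W : ℕ → Multiset ℕ → ℕ
  | 0, s => if s = 0 then 1 else 0
  | (n+1), s => ∑ m ∈ nbr s, W n m

lemma W_eq : ∀ n : ℕ, ∀ s : Multiset ℕ, 0 ∉ s →
    W n s = Nat.choose n s.sum * dd (n - s.sum) * f s := by
  intro n
  induction n with
  | zero =>
    intro s hs
    rcases eq_or_ne s 0 with rfl | h
    · simp [W, f_zero, dd]
    · have : s.sum ≠ 0 := fun h0 => h ((sum_eq_zero_iff hs).1 h0)
      rw [show W 0 s = 0 from if_neg h, Nat.choose_eq_zero_of_lt (by omega)]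
      ring
  | succ n IH =>
    intro s hs
    have hW : W (n+1) s = ∑ m ∈ nbr s, W n m := rfl
    have hdisj : Disjoint (covFin s) (dnFin s) := by
      rw [Finset.disjoint_left]
      intro m h1 h2
      have := covFin_sum h1
      have := dnFin_sum h2
      omega
    rw [hW, nbr, if_neg hs, Finset.sum_union hdisj]
    have hcov : ∑ m ∈ covFin s, W n m
        = Nat.choose n (s.sum + 1) * dd (n - (s.sum + 1)) * ((s.sum + 1) * f s) := by
      rw [← keyB s.sum s hs rfl, Finset.mul_sum]
      refine Finset.sum_congr rfl fun m hm => ?_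
      rw [IH m (covFin_pos hs hm), covFin_sum hm]
    rw [hcov]
    rcases eq_or_ne s 0 with rfl | hs0
    · have hdn0 : dnFin (0 : Multiset ℕ) = ∅ := by
        rw [dnFin]; simp
      rw [hdn0, Finset.sum_empty, add_zero]
      simp only [Multiset.sum_zero, Nat.choose_zero_right, Nat.sub_zero, one_mul,
        Nat.choose_one_right, f_zero, mul_one, zero_add]
      rw [AR0 n]
    · have hsum1 : 1 ≤ s.sum := by
        have : s.sum ≠ 0 := fun h0 => hs0 ((sum_eq_zero_iff hs).1 h0)
        omega
      obtain ⟨u, hu⟩ : ∃ u, s.sum = u + 1 := ⟨s.sum - 1, by omega⟩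
      have hdn : ∑ r ∈ dnFin s, W n r
          = Nat.choose n u * dd (n - u) * f s := by
        rw [f_ne hs0, Finset.mul_sum]
        refine Finset.sum_congr rfl fun r hr => ?_
        have hrs : r.sum = u := by have := dnFin_sum hr; omega
        rw [IH r (dnFin_pos hs hr), hrs]
      rw [hdn, hu, show n + 1 - (u + 1) = n - u from by omega]
      have := ARpos n u
      calc Nat.choose n (u+1+1) * dd (n - (u+1+1)) * ((u+1+1) * f s)
            + Nat.choose n u * dd (n - u) * f s
          = (Nat.choose n (u+2) * dd (n-(u+2)) * (u+2) + Nat.choose n u * dd (n-u)) * f s := by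
            ring
        _ = Nat.choose (n+1) (u+1) * dd (n-u) * f s := by rw [← ARpos n u]

/-! ### walks as sequences -/

def WSet (n : ℕ) (t : Multiset ℕ) : Type :=
  {p : Fin (n+1) → Multiset ℕ //
    p 0 = 0 ∧ p (Fin.last n) = t ∧ ∀ i : Fin n, SimpleMove (p i.castSucc) (p i.succ)}

def gmap {n : ℕ} {t : Multiset ℕ} (p : WSet (n+1) t) : {x // x ∈ nbr t} :=
  ⟨p.1 ((Fin.last n).castSucc), by
    have h := p.2.2.2 (Fin.last n)
    rw [Fin.succ_last, p.2.2.1] at h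
    exact mem_nbr.2 h⟩

def fiberEquiv {n : ℕ} {t : Multiset ℕ} (m : {x // x ∈ nbr t}) :
    {p : WSet (n+1) t // gmap p = m} ≃ WSet n m.1 where
  toFun p :=
    ⟨fun j => p.1.1 j.castSucc, by
      refine ⟨?_, ?_, ?_⟩
      · show p.1.1 (Fin.castSucc 0) = 0
        rw [Fin.castSucc_zero]
        exact p.1.2.1
      · have := congrArg Subtype.val p.2
        exact this
      · intro i
        have h := p.1.2.2.2 i.castSucc
        rwa [Fin.succ_castSucc] at h⟩
  invFun q :=
    ⟨⟨Fin.snoc q.1 t, by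
      refine ⟨?_, ?_, ?_⟩
      · rw [show (0 : Fin (n+2)) = Fin.castSucc 0 from (Fin.castSucc_zero).symm,
          Fin.snoc_castSucc]
        exact q.2.1
      · rw [Fin.snoc_last]
      · intro i
        refine Fin.lastCases ?_ ?_ i
        · rw [Fin.succ_last, Fin.snoc_last, Fin.snoc_castSucc, q.2.2.1]
          exact mem_nbr.1 m.2
        · intro j
          rw [Fin.succ_castSucc, Fin.snoc_castSucc, Fin.snoc_castSucc]
          exact q.2.2.2 j⟩, by
      apply Subtype.ext
      show (Fin.snoc q.1 t : Fin (n+2) → Multiset ℕ) ((Fin.last n).castSucc) = m.1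
      rw [Fin.snoc_castSucc, q.2.2.1]⟩
  left_inv p := by
    apply Subtype.ext
    apply Subtype.ext
    funext i
    refine Fin.lastCases ?_ ?_ i
    · show (Fin.snoc _ t : Fin (n+2) → Multiset ℕ) (Fin.last (n+1)) = p.1.1 (Fin.last (n+1))
      rw [Fin.snoc_last, p.1.2.2.1]
    · intro j
      show (Fin.snoc _ t : Fin (n+2) → Multiset ℕ) j.castSucc = p.1.1 j.castSucc
      rw [Fin.snoc_castSucc]
  right_inv q := by
    apply Subtype.ext
    funext j
    show (Fin.snoc q.1 t : Fin (n+2) → Multiset ℕ) j.castSucc = q.1 j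
    rw [Fin.snoc_castSucc]

def stepEquiv (n : ℕ) (t : Multiset ℕ) :
    WSet (n+1) t ≃ Σ m : {x // x ∈ nbr t}, WSet n m.1 :=
  ((Equiv.sigmaFiberEquiv (gmap (n := n) (t := t))).symm).trans
    (Equiv.sigmaCongrRight fiberEquiv)

lemma WSet_finite_card : ∀ n t, Finite (WSet n t) ∧ Nat.card (WSet n t) = W n t := by
  intro n
  induction n with
  | zero =>
    intro t
    rcases eq_or_ne t 0 with rfl | h
    · have e : WSet 0 (0 : Multiset ℕ) ≃ Unit :=
        { toFun := fun _ => ()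
          invFun := fun _ => ⟨fun _ => 0, rfl, rfl, fun i => i.elim0⟩
          left_inv := fun p => by
            apply Subtype.ext
            funext j
            have hj : j = 0 := Fin.fin_one_eq_zero j
            rw [hj]
            exact p.2.1.symm
          right_inv := fun _ => rfl }
      refine ⟨Finite.of_equiv _ e.symm, ?_⟩
      rw [Nat.card_congr e]
      simp [W]
    · haveI e : IsEmpty (WSet 0 t) := by
        constructor
        intro p
        exact h (p.2.2.1.symm.trans p.2.1)
      refine ⟨inferInstance, ?_⟩
      rw [Nat.card_of_isEmpty]
      simp [W, h]
  | succ n IH =>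
    intro t
    have hfin : ∀ m : {x // x ∈ nbr t}, Finite (WSet n m.1) := fun m => (IH m.1).1
    haveI : ∀ m : {x // x ∈ nbr t}, Finite (WSet n m.1) := hfin
    have hfinSig : Finite (Σ m : {x // x ∈ nbr t}, WSet n m.1) := inferInstance
    have e := stepEquiv n t
    refine ⟨Finite.of_equiv _ e.symm, ?_⟩
    rw [Nat.card_congr e]
    haveI : ∀ m : {x // x ∈ nbr t}, Fintype (WSet n m.1) := fun m => Fintype.ofFinite _
    rw [Nat.card_eq_fintype_card, Fintype.card_sigma]
    have : ∀ m : {x // x ∈ nbr t}, Fintype.card (WSet n m.1) = W n m.1 := by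
      intro m
      rw [← Nat.card_eq_fintype_card]
      exact (IH m.1).2
    rw [Finset.sum_congr rfl (fun m _ => this m)]
    show ∑ m : {x // x ∈ nbr t}, W n m.1 = W (n+1) t
    rw [Finset.sum_coe_sort (nbr t) (W n)]
    rfl

/-! ### final arithmetic -/

lemma dd_even : ∀ k : ℕ, dd (2*k) = ∏ i ∈ Finset.range k, (2*i+1) := by
  intro k
  induction k with
  | zero => rfl
  | succ k IH =>
    rw [Finset.prod_range_succ, ← IH, show 2*(k+1) = 2*k+2 from by ring]
    show (2*k+1) * dd (2*k) = dd (2*k) * (2*k+1)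
    ring

lemma fact_eq (k : ℕ) :
    (2*k).factorial = 2^k * k.factorial * ∏ i ∈ Finset.range k, (2*i+1) := by
  induction k with
  | zero => rfl
  | succ k IH =>
    rw [show 2*(k+1) = (2*k+1)+1 from by ring, Nat.factorial_succ, Nat.factorial_succ, IH,
      Finset.prod_range_succ, Nat.factorial_succ, pow_succ]
    ring

end Osc

/-- The number of sequences of partitions `∅ = λ_0, λ_1, …, λ_{2k} = ∅`, each obtained from
the previous one by adding or removing one cell of the Young diagram, equals
`(2k)!/(2^k·k!) = 1·3·5···(2k−1)`. -/
theorem card_simple_closed_paths (k : ℕ) :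
    Nat.card {p : Fin (2 * k + 1) → Multiset ℕ //
        p 0 = 0 ∧ p (Fin.last (2 * k)) = 0 ∧
        ∀ i : Fin (2 * k), SimpleMove (p i.castSucc) (p i.succ)} =
      (2 * k).factorial / (2 ^ k * k.factorial) ∧
    (2 * k).factorial / (2 ^ k * k.factorial) = ∏ i ∈ Finset.range k, (2 * i + 1) := by
  have hpos : 0 < 2 ^ k * k.factorial := by positivity
  have hdiv : (2 * k).factorial / (2 ^ k * k.factorial) = ∏ i ∈ Finset.range k, (2 * i + 1) := by
    rw [Osc.fact_eq k, Nat.mul_div_cancel_left _ hpos]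
  constructor
  · have h1 : Nat.card (Osc.WSet (2 * k) 0) = Osc.W (2 * k) 0 :=
      (Osc.WSet_finite_card (2 * k) 0).2
    have h2 : Osc.W (2 * k) 0 = Osc.dd (2 * k) := by
      rw [Osc.W_eq (2 * k) 0 (by simp)]
      simp [Osc.f_zero]
    have h3 : Nat.card (Osc.WSet (2 * k) 0) = (2 * k).factorial / (2 ^ k * k.factorial) := by
      rw [h1, h2, hdiv, Osc.dd_even]
    exact h3
  · exact hdiv
end
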